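/- arXiv:math/0607077 — 4 statements merged into one kernel-verified Lean document; each statement's English description precedes it below -/
import Mathlib

section
/- A graph M has a nowhere-zero k-flow (k ≥ 3) if and only if there is an orientation D of M such that the function w(v) = (k/(k−2))·(2·d⁺_D(v) − d(v)) is a balanced valuation of M, i.e., for every vertex subset X, |∑_{v∈X} w(v)| ≤ |∂(X)|, where ∂(X) is the set of edges with exactly one end in X. -/
/-
For an orientation `D` and a vertex set `X`, let `a⁺(X)` and `a⁻(X)` count the arcs of `D`
leaving and entering `X`. Then `∑_{v ∈ X} (2 d⁺(v) − d(v)) = a⁺(X) − a⁻(X)` and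
`|∂(X)| = a⁺(X) + a⁻(X)`, so the valuation is balanced exactly when `a⁺(X) ≤ (k − 1) a⁻(X)`
for every `X`. If `D` orients each edge along the positive direction of a nowhere-zero `k`-flow,
this holds because the net flow out of `X` vanishes while every arc carries between `1` and
`k − 1`. Conversely, it is Hoffman's condition for a circulation taking values in `[1, k − 1]` on
the arcs of `D`: a skew-symmetric integer function within these bounds of minimal total imbalance
`∑_v |excess(v)|` is a circulation, since otherwise augmenting along a residual path from a vertex
of negative excess to one of positive excess would lower the imbalance.
-/

variable {V : Type*} [Fintype V] [DecidableEq V]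

/-- The edge cut `∂(X)`: the set of edges of `G` with exactly one end in `X`. -/
noncomputable def SimpleGraph.cutCard (G : SimpleGraph V) (X : Finset V) : ℕ :=
  {e ∈ G.edgeSet | ∃ x y : V, e = s(x, y) ∧ x ∈ X ∧ y ∉ X}.ncard

/-- A balanced valuation of `G`: a real vertex-function `w` with
`|∑_{v ∈ X} w(v)| ≤ |∂(X)|` for every vertex subset `X`. -/
noncomputable def SimpleGraph.IsBalancedValuation (G : SimpleGraph V) (w : V → ℝ) : Prop :=
  ∀ X : Finset V, |∑ v ∈ X, w v| ≤ (G.cutCard X : ℝ)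

/-- A nowhere-zero `k`-flow in the signed model: a skew-symmetric integer function on
ordered pairs (sign = orientation, absolute value = flow value in `{1, …, k−1}`),
supported on edges and conserved at every vertex. -/
def SimpleGraph.IsNZFlow (G : SimpleGraph V) (k : ℕ) (f : V → V → ℤ) : Prop :=
  (∀ v w, f v w = - f w v) ∧ (∀ v w, ¬ G.Adj v w → f v w = 0) ∧
  (∀ v, ∑ w, f v w = 0) ∧ ∀ v w, G.Adj v w → 1 ≤ |f v w| ∧ |f v w| ≤ (k : ℤ) - 1

/-- An orientation of `G`: a direction for each edge. -/
def SimpleGraph.IsOrientation (G : SimpleGraph V) (D : V → V → Prop) : Prop :=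
  (∀ v w, D v w → G.Adj v w) ∧ ∀ v w, G.Adj v w → (D v w ↔ ¬ D w v)

/-- The outdegree `d⁺_D(v)` of `v` under the orientation `D`. -/
noncomputable def outDeg (D : V → V → Prop) (v : V) : ℕ := {w | D v w}.ncard

open Finset

section SkewSymmetric

variable {α : Type*}

theorem sum_sum_eq_zero_of_skew {f : α → α → ℤ} (hf : ∀ a b, f a b = -f b a) (s : Finset α) :
    ∑ a ∈ s, ∑ b ∈ s, f a b = 0 := by
  have h : ∑ a ∈ s, ∑ b ∈ s, f a b = -∑ a ∈ s, ∑ b ∈ s, f a b := by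
    conv_rhs => rw [sum_comm]
    simp only [← sum_neg_distrib, ← hf]
  linarith

theorem sum_sum_compl_eq_of_skew [Fintype α] [DecidableEq α] {f : α → α → ℤ}
    (hf : ∀ a b, f a b = -f b a) (X : Finset α) :
    ∑ a ∈ X, ∑ b, f a b = ∑ a ∈ X, ∑ b ∈ Xᶜ, f a b := by
  simp only [← sum_add_sum_compl X, sum_add_distrib, sum_sum_eq_zero_of_skew hf, zero_add]

end SkewSymmetric

open Classical in
noncomputable def ind (P : Prop) : ℤ := if P then 1 else 0

theorem ind_pos {P : Prop} (h : P) : ind P = 1 := by simp [ind, h]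

theorem ind_neg {P : Prop} (h : ¬P) : ind P = 0 := by simp [ind, h]

noncomputable def arcCount (D : V → V → Prop) (X Y : Finset V) : ℤ :=
  ∑ v ∈ X, ∑ w ∈ Y, ind (D v w)

omit [Fintype V] [DecidableEq V] in
theorem sum_sum_mul_ind_sub_mul_ind (D : V → V → Prop) (α β : ℤ) (X Y : Finset V) :
    ∑ v ∈ X, ∑ w ∈ Y, (α * ind (D v w) - β * ind (D w v)) =
      α * arcCount D X Y - β * arcCount D Y X := by
  simp only [sum_sub_distrib, ← mul_sum, arcCount]
  congr 2
  exact sum_comm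

omit [DecidableEq V] in
theorem outDeg_eq_sum_ind (D : V → V → Prop) (v : V) : (outDeg D v : ℤ) = ∑ w, ind (D v w) := by
  classical
  rw [outDeg, Set.ncard_eq_toFinset_card', Set.toFinset_ofPred, card_filter]
  push_cast
  simp only [ind]

omit [DecidableEq V] in
theorem SimpleGraph.degree_eq_sum_ind (M : SimpleGraph V) [DecidableRel M.Adj] (v : V) :
    (M.degree v : ℤ) = ∑ w, ind (M.Adj v w) := by
  rw [← M.card_neighborFinset_eq_degree, M.neighborFinset_eq_filter, card_filter]
  push_cast
  simp only [ind]
  convert rfl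

theorem SimpleGraph.cutCard_eq_sum_ind (M : SimpleGraph V) (X : Finset V) :
    (M.cutCard X : ℤ) = ∑ v ∈ X, ∑ w ∈ Xᶜ, ind (M.Adj v w) := by
  classical
  set E := {p ∈ X ×ˢ Xᶜ | M.Adj p.1 p.2}
  have hcut : {e ∈ M.edgeSet | ∃ x y, e = s(x, y) ∧ x ∈ X ∧ y ∉ X} =
      (fun p : V × V => s(p.1, p.2)) '' E := by
    ext e
    simp only [E, Set.mem_ofPred_eq, coe_filter, Set.mem_image, mem_product, mem_compl]
    constructor
    · rintro ⟨he, x, y, rfl, hx, hy⟩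
      exact ⟨(x, y), ⟨⟨hx, hy⟩, he⟩, rfl⟩
    · rintro ⟨⟨x, y⟩, ⟨⟨hx, hy⟩, hxy⟩, rfl⟩
      exact ⟨hxy, x, y, rfl, hx, hy⟩
  have hinj : Set.InjOn (fun p : V × V => s(p.1, p.2)) E := by
    rintro ⟨x, y⟩ hp ⟨x', y'⟩ hq hpq
    simp only [E, coe_filter, mem_product, mem_compl, Set.mem_ofPred_eq] at hp hq
    rcases Sym2.eq_iff.mp hpq with ⟨rfl, rfl⟩ | ⟨rfl, rfl⟩
    · rfl
    · exact absurd hp.1.1 hq.1.2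
  rw [SimpleGraph.cutCard, hcut, hinj.ncard_image, Set.ncard_coe_finset, card_filter,
    sum_product]
  push_cast
  simp only [ind]

namespace SimpleGraph.IsOrientation

variable {M : SimpleGraph V} {D : V → V → Prop}

omit [Fintype V] [DecidableEq V] in
theorem asymm (hD : M.IsOrientation D) {v w : V} (h : D v w) : ¬D w v :=
  (hD.2 v w (hD.1 v w h)).mp h

omit [Fintype V] [DecidableEq V] in
theorem ind_adj (hD : M.IsOrientation D) (v w : V) :
    ind (M.Adj v w) = ind (D v w) + ind (D w v) := by
  by_cases hvw : D v w
  · rw [ind_pos (hD.1 v w hvw), ind_pos hvw, ind_neg (hD.asymm hvw)]; rfl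
  by_cases hwv : D w v
  · rw [ind_pos (hD.1 w v hwv).symm, ind_neg hvw, ind_pos hwv]; rfl
  rw [ind_neg fun h => hvw ((hD.2 v w h).mpr hwv), ind_neg hvw, ind_neg hwv]; rfl

theorem cutCard_eq (hD : M.IsOrientation D) (X : Finset V) :
    (M.cutCard X : ℤ) = arcCount D X Xᶜ + arcCount D Xᶜ X := by
  simpa [M.cutCard_eq_sum_ind, hD.ind_adj] using sum_sum_mul_ind_sub_mul_ind D 1 (-1) X Xᶜ

theorem sum_two_mul_outDeg_sub_degree [DecidableRel M.Adj] (hD : M.IsOrientation D)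
    (X : Finset V) :
    ∑ v ∈ X, (2 * (outDeg D v : ℤ) - M.degree v) = arcCount D X Xᶜ - arcCount D Xᶜ X := by
  have hv : ∀ v, 2 * (outDeg D v : ℤ) - M.degree v = ∑ w, (ind (D v w) - ind (D w v)) := by
    intro v
    simp only [outDeg_eq_sum_ind, M.degree_eq_sum_ind, hD.ind_adj, sum_add_distrib,
      sum_sub_distrib]
    ring
  simp only [hv]
  rw [sum_sum_compl_eq_of_skew (fun v w => by ring)]
  simpa using sum_sum_mul_ind_sub_mul_ind D 1 1 X Xᶜ

end SimpleGraph.IsOrientation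

theorem abs_div_mul_sub_le_add_iff {k a b : ℝ} (hk : 2 < k) :
    |k / (k - 2) * (a - b)| ≤ a + b ↔ a ≤ (k - 1) * b ∧ b ≤ (k - 1) * a := by
  have h : 0 < k - 2 := by linarith
  rw [abs_le, div_mul_eq_mul_div, le_div_iff₀ h, div_le_iff₀ h]
  constructor <;> rintro ⟨h₁, h₂⟩ <;> constructor <;> linarith

theorem SimpleGraph.IsOrientation.isBalancedValuation_iff {M : SimpleGraph V} [DecidableRel M.Adj]
    {D : V → V → Prop} (hD : M.IsOrientation D) {k : ℝ} (hk : 2 < k) :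
    M.IsBalancedValuation (fun v => k / (k - 2) * (2 * (outDeg D v : ℝ) - M.degree v)) ↔
      ∀ X : Finset V, (arcCount D X Xᶜ : ℝ) ≤ (k - 1) * arcCount D Xᶜ X := by
  have hsum (X : Finset V) : ∑ v ∈ X, k / (k - 2) * (2 * (outDeg D v : ℝ) - M.degree v) =
      k / (k - 2) * (arcCount D X Xᶜ - arcCount D Xᶜ X) := by
    rw [← mul_sum]
    congr 1
    exact_mod_cast hD.sum_two_mul_outDeg_sub_degree X
  have hcut (X : Finset V) : (M.cutCard X : ℝ) = arcCount D X Xᶜ + arcCount D Xᶜ X := by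
    exact_mod_cast hD.cutCard_eq X
  simp only [SimpleGraph.IsBalancedValuation, hsum, hcut, abs_div_mul_sub_le_add_iff hk]
  exact ⟨fun h X => (h X).1, fun h X => ⟨h X, by simpa using h Xᶜ⟩⟩

namespace SimpleGraph.IsNZFlow

variable {M : SimpleGraph V} {k : ℕ} {f : V → V → ℤ}

omit [DecidableEq V] in
theorem isOrientation_pos (hf : M.IsNZFlow k f) : M.IsOrientation (fun v w => 0 < f v w) := by
  obtain ⟨hskew, hsupp, -, hbound⟩ := hf
  refine ⟨fun v w hpos => ?_, fun v w hvw => ?_⟩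
  · by_contra h
    exact hpos.ne' (hsupp v w h)
  · have hne : f v w ≠ 0 := abs_pos.mp (by linarith [(hbound v w hvw).1])
    have := hskew w v
    change 0 < f v w ↔ ¬0 < f w v
    omega

omit [DecidableEq V] in
theorem ind_sub_le (hf : M.IsNZFlow k f) (v w : V) :
    ind (0 < f v w) - ((k : ℤ) - 1) * ind (0 < f w v) ≤ f v w := by
  obtain ⟨hskew, hsupp, -, hbound⟩ := hf
  have := hskew w v
  rcases lt_trichotomy 0 (f v w) with h | h | h
  · rw [ind_pos h, ind_neg (by omega)]; omega
  · rw [ind_neg (by omega), ind_neg (by omega)]; omega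
  · have hvw : M.Adj v w := by
      by_contra hvw
      exact h.ne (hsupp v w hvw)
    have := (abs_le.mp (hbound v w hvw).2).1
    rw [ind_neg (by omega), ind_pos (by omega)]; linarith

theorem arcCount_le (hf : M.IsNZFlow k f) (X : Finset V) :
    arcCount (fun v w => 0 < f v w) X Xᶜ ≤
      ((k : ℤ) - 1) * arcCount (fun v w => 0 < f v w) Xᶜ X := by
  have hcross : ∑ v ∈ X, ∑ w ∈ Xᶜ, f v w = 0 := by
    rw [← sum_sum_compl_eq_of_skew hf.1]
    exact sum_eq_zero fun v _ => hf.2.2.1 v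
  have hsum := sum_sum_mul_ind_sub_mul_ind (fun v w => 0 < f v w) 1 ((k : ℤ) - 1) X Xᶜ
  simp only [one_mul] at hsum
  linarith [sum_le_sum fun v (_ : v ∈ X) => sum_le_sum fun w (_ : w ∈ Xᶜ) => hf.ind_sub_le v w]

end SimpleGraph.IsNZFlow

inductive RelPath {α : Type*} (r : α → α → Prop) : ℕ → α → α → Prop
  | refl (a : α) : RelPath r 0 a a
  | tail {a b c : α} {n : ℕ} : RelPath r n a b → r b c → RelPath r (n + 1) a c

theorem RelPath.mono_or_through {α : Type*} {r r' : α → α → Prop} {a : α}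
    (hr : ∀ x y, x ≠ a → y ≠ a → r x y → r' x y) {n : ℕ} {b c : α} (hp : RelPath r n b c) :
    c ≠ a → RelPath r' n b c ∨ ∃ m < n, RelPath r m b a := by
  induction hp with
  | refl b => exact fun _ => .inl (.refl b)
  | @tail b x c n hbx hxc ih =>
    intro hc
    by_cases hx : x = a
    · exact .inr ⟨n, n.lt_succ_self, hx ▸ hbx⟩
    rcases ih hx with h | ⟨m, hm, h⟩
    · exact .inl (h.tail (hr x c hx hc hxc))
    · exact .inr ⟨m, hm.trans n.lt_succ_self, h⟩

namespace Circulation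

def IsPreflow (D : V → V → Prop) (c : ℤ) (g : V → V → ℤ) : Prop :=
  (∀ v w, g v w = -g w v) ∧ (∀ v w, ¬D v w → ¬D w v → g v w = 0) ∧
    ∀ v w, D v w → 1 ≤ g v w ∧ g v w ≤ c

def excess (g : V → V → ℤ) (v : V) : ℤ := ∑ w, g v w

def imbalance (g : V → V → ℤ) : ℕ := ∑ v, (excess g v).natAbs

def IsResidual (D : V → V → Prop) (c : ℤ) (g : V → V → ℤ) (a b : V) : Prop :=
  (D a b ∧ g a b < c) ∨ (D b a ∧ 1 < g b a)

def push (g : V → V → ℤ) (a b x y : V) : ℤ :=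
  g x y + (if x = a ∧ y = b then 1 else 0) - (if x = b ∧ y = a then 1 else 0)

variable {D : V → V → Prop} {c : ℤ} {g : V → V → ℤ}

omit [Fintype V] [DecidableEq V] in
theorem isPreflow_ind_sub_ind (hD : ∀ v w, D v w → ¬D w v) (hc : 1 ≤ c) :
    IsPreflow D c (fun v w => ind (D v w) - ind (D w v)) := by
  refine ⟨fun v w => by ring, fun v w hvw hwv => ?_, fun v w hvw => ?_⟩
  · simp [ind_neg hvw, ind_neg hwv]
  · simp only [ind_pos hvw, ind_neg (hD v w hvw)]
    omega

namespace IsPreflow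

omit [Fintype V] [DecidableEq V] in
theorem asymm (hg : IsPreflow D c g) {a b : V} (hab : D a b) : ¬D b a := fun hba => by
  have := hg.1 a b
  have := (hg.2.2 a b hab).1
  have := (hg.2.2 b a hba).1
  omega

omit [Fintype V] [DecidableEq V] in
theorem ne_of_isResidual (hg : IsPreflow D c g) {a b : V} (hr : IsResidual D c g a b) : a ≠ b := by
  rintro rfl
  rcases hr with ⟨h, -⟩ | ⟨h, -⟩ <;> exact hg.asymm h h

omit [Fintype V] [DecidableEq V] in
theorem eq_of_not_isResidual (hg : IsPreflow D c g) {a b : V} (hr : ¬IsResidual D c g a b) :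
    g a b = c * ind (D a b) - ind (D b a) := by
  simp only [IsResidual, not_or, not_and, not_lt] at hr
  by_cases hab : D a b
  · have := hg.2.2 a b hab
    rw [ind_pos hab, ind_neg (hg.asymm hab)]
    linarith [hr.1 hab]
  by_cases hba : D b a
  · have := hg.2.2 b a hba
    rw [ind_neg hab, ind_pos hba, hg.1 a b]
    linarith [hr.2 hba]
  rw [ind_neg hab, ind_neg hba, hg.2.1 a b hab hba]
  ring

omit [DecidableEq V] in
theorem sum_excess (hg : IsPreflow D c g) : ∑ v, excess g v = 0 :=
  sum_sum_eq_zero_of_skew hg.1 univ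

theorem sum_excess_eq_of_not_isResidual (hg : IsPreflow D c g) {S : Finset V}
    (hS : ∀ a ∈ S, ∀ b ∉ S, ¬IsResidual D c g a b) :
    ∑ a ∈ S, excess g a = c * arcCount D S Sᶜ - arcCount D Sᶜ S := by
  rw [← one_mul (arcCount D Sᶜ S), ← sum_sum_mul_ind_sub_mul_ind]
  simp only [excess, sum_sum_compl_eq_of_skew hg.1, one_mul]
  exact sum_congr rfl fun a ha => sum_congr rfl fun b hb =>
    hg.eq_of_not_isResidual (hS a ha b (mem_compl.1 hb))

/- Every residual arc leaving the set `S` of vertices reachable from `v` is saturated, so the cut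
condition for `Sᶜ` makes the total excess of `S` nonnegative. -/
theorem exists_pos_excess_of_neg (hg : IsPreflow D c g)
    (hcut : ∀ X : Finset V, arcCount D X Xᶜ ≤ c * arcCount D Xᶜ X) {v : V} (hv : excess g v < 0) :
    ∃ u, 0 < excess g u ∧ ∃ n, RelPath (IsResidual D c g) n v u := by
  classical
  set S : Finset V := {u | ∃ n, RelPath (IsResidual D c g) n v u}
  have hvS : v ∈ S := mem_filter.2 ⟨mem_univ v, 0, .refl v⟩
  have hS : ∀ a ∈ S, ∀ b ∉ S, ¬IsResidual D c g a b := fun a ha b hb hab => by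
    obtain ⟨n, hn⟩ := (mem_filter.1 ha).2
    exact hb (mem_filter.2 ⟨mem_univ b, n + 1, hn.tail hab⟩)
  have hsum : 0 < ∑ u ∈ S.erase v, excess g u := by
    have := hcut Sᶜ
    rw [compl_compl] at this
    linarith [add_sum_erase S (excess g) hvS, hg.sum_excess_eq_of_not_isResidual hS]
  obtain ⟨u, hu, hpos⟩ := exists_lt_of_sum_lt (f := fun _ => (0 : ℤ)) (g := excess g)
    (by rwa [sum_const_zero])
  exact ⟨u, hpos, (mem_filter.1 (mem_of_mem_erase hu)).2⟩

end IsPreflow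

section Push

variable {a b : V}

omit [Fintype V] in
theorem push_apply_of_ne {x y : V} (hx : x ≠ b) (hy : y ≠ b) : push g a b x y = g x y := by
  simp [push, hx, hy]

omit [Fintype V] in
theorem isResidual_push_of_ne {x y : V} (hx : x ≠ b) (hy : y ≠ b)
    (hr : IsResidual D c g x y) : IsResidual D c (push g a b) x y := by
  rwa [IsResidual, push_apply_of_ne hx hy, push_apply_of_ne hy hx]

theorem excess_push (v : V) :
    excess (push g a b) v = excess g v + (if v = a then 1 else 0) - (if v = b then 1 else 0) := by
  simp [excess, push, sum_add_distrib, sum_sub_distrib, ite_and]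

theorem excess_push_left (hab : a ≠ b) : excess (push g a b) a = excess g a + 1 := by
  simp [excess_push, hab]

theorem excess_push_right (hab : a ≠ b) : excess (push g a b) b = excess g b - 1 := by
  simp [excess_push, hab.symm]

theorem imbalance_push (hab : a ≠ b) :
    imbalance (push g a b) + (excess g a).natAbs + (excess g b).natAbs =
      imbalance g + (excess g a + 1).natAbs + (excess g b - 1).natAbs := by
  have h := Fintype.sum_eq_add a b hab
    (f := fun v => ((excess (push g a b) v).natAbs : ℤ) - (excess g v).natAbs)
    (fun v ⟨hva, hvb⟩ => by simp [excess_push, hva, hvb])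
  rw [sum_sub_distrib, excess_push_left hab, excess_push_right hab] at h
  zify
  simp only [imbalance]
  push_cast at h ⊢
  linarith

omit [Fintype V] in
theorem IsPreflow.push_of_isResidual (hg : IsPreflow D c g) (hr : IsResidual D c g a b) :
    IsPreflow D c (push g a b) := by
  have hab := hg.ne_of_isResidual hr
  refine ⟨fun x y => ?_, fun x y hxy hyx => ?_, fun x y hxy => ?_⟩
  · have e₁ : (y = a ∧ x = b) ↔ (x = b ∧ y = a) := and_comm
    have e₂ : (y = b ∧ x = a) ↔ (x = a ∧ y = b) := and_comm
    simp only [push, hg.1 x y, e₁, e₂]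
    ring
  · have h₁ : ¬(x = a ∧ y = b) := by
      rintro ⟨rfl, rfl⟩
      rcases hr with ⟨h, -⟩ | ⟨h, -⟩ <;> contradiction
    have h₂ : ¬(x = b ∧ y = a) := by
      rintro ⟨rfl, rfl⟩
      rcases hr with ⟨h, -⟩ | ⟨h, -⟩ <;> contradiction
    simp [push, h₁, h₂, hg.2.1 x y hxy hyx]
  · have hbd := hg.2.2 x y hxy
    by_cases h₁ : x = a ∧ y = b
    · obtain ⟨rfl, rfl⟩ := h₁
      rcases hr with ⟨-, h⟩ | ⟨h, -⟩
      · simp only [push, hab, and_self, if_true]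
        omega
      · exact absurd h (hg.asymm hxy)
    by_cases h₂ : x = b ∧ y = a
    · obtain ⟨rfl, rfl⟩ := h₂
      rcases hr with ⟨h, -⟩ | ⟨-, h⟩
      · exact absurd h (hg.asymm hxy)
      · simp only [push, hab, and_self, and_false, if_true, if_false]
        omega
    simp only [push, h₁, h₂, if_false]
    omega

/- Push one unit along the last arc `x → u`. Unless this already lowers the imbalance, `x` now has
positive excess and the rest of the path, cut short if it passes through `u`, is still residual. -/
theorem IsPreflow.exists_imbalance_lt (hg : IsPreflow D c g) {v u : V} (hv : excess g v < 0)
    (hu : 0 < excess g u) {n : ℕ} (hp : RelPath (IsResidual D c g) n v u) :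
    ∃ g', IsPreflow D c g' ∧ imbalance g' < imbalance g := by
  induction n using Nat.strong_induction_on generalizing g u with
  | _ n ih =>
  cases hp with
  | refl => omega
  | @tail _ x _ m hvx hxu =>
    have hxu' := hg.ne_of_isResidual hxu
    have himb := imbalance_push (g := g) hxu'
    by_cases hx : excess g x < 0
    · exact ⟨_, hg.push_of_isResidual hxu, by omega⟩
    have hvx' : v ≠ x := by rintro rfl; omega
    have hvu : v ≠ u := by rintro rfl; omega
    rcases hvx.mono_or_through (fun y z hy hz => isResidual_push_of_ne (a := x) hy hz) hxu' with
      hvx₁ | ⟨k, hk, hvu₁⟩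
    · have hv₁ : excess (push g x u) v < 0 := by simpa [excess_push, hvx', hvu] using hv
      have hx₁ : 0 < excess (push g x u) x := by rw [excess_push_left hxu']; omega
      obtain ⟨g', hg', hlt⟩ := ih m m.lt_succ_self (hg.push_of_isResidual hxu) hv₁ hx₁ hvx₁
      exact ⟨g', hg', by omega⟩
    · exact ih k (by omega) hg hv hu hvu₁

end Push

/- Hoffman's circulation theorem, for the bounds `[1, c]` on the arcs of `D`. -/
theorem exists_circulation (hD : ∀ v w, D v w → ¬D w v) (hc : 1 ≤ c)
    (hcut : ∀ X : Finset V, arcCount D X Xᶜ ≤ c * arcCount D Xᶜ X) :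
    ∃ g, IsPreflow D c g ∧ ∀ v, excess g v = 0 := by
  obtain ⟨g, hg, hmin⟩ := (measure imbalance).wf.has_min {g | IsPreflow D c g}
    ⟨_, isPreflow_ind_sub_ind hD hc⟩
  refine ⟨g, hg, fun v₀ => ?_⟩
  by_contra h₀
  obtain ⟨v, -, hv⟩ := exists_pos_of_sum_zero_of_exists_nonzero (fun v => -excess g v)
    (by simp [hg.sum_excess]) ⟨v₀, mem_univ _, by simpa using h₀⟩
  obtain ⟨u, hu, n, hp⟩ := hg.exists_pos_excess_of_neg hcut (neg_pos.1 hv)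
  obtain ⟨g', hg', hlt⟩ := hg.exists_imbalance_lt (neg_pos.1 hv) hu hp
  exact hmin g' hg' hlt

end Circulation

omit [DecidableEq V] in
theorem Circulation.IsPreflow.isNZFlow {M : SimpleGraph V} {D : V → V → Prop} {k : ℕ}
    {g : V → V → ℤ} (hg : IsPreflow D ((k : ℤ) - 1) g) (hD : M.IsOrientation D)
    (hcirc : ∀ v, excess g v = 0) : M.IsNZFlow k g := by
  refine ⟨hg.1, fun v w hvw => hg.2.1 v w (fun h => hvw (hD.1 v w h))
    (fun h => hvw (hD.1 w v h).symm), hcirc, fun v w hvw => ?_⟩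
  have hskew := hg.1 v w
  have hbd : (1 ≤ g v w ∧ g v w ≤ k - 1) ∨ (1 ≤ g w v ∧ g w v ≤ k - 1) := by
    by_cases h : D v w
    · exact .inl (hg.2.2 v w h)
    · exact .inr (hg.2.2 w v (not_not.1 (mt (hD.2 v w hvw).2 h)))
  rcases abs_cases (g v w) with ⟨he, _⟩ | ⟨he, _⟩ <;> rw [he] <;> omega

theorem statement1 (M : SimpleGraph V) [DecidableRel M.Adj] (k : ℕ) (hk : 3 ≤ k) :
    (∃ f, M.IsNZFlow k f) ↔
      ∃ D : V → V → Prop, M.IsOrientation D ∧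
        M.IsBalancedValuation
          (fun v => ((k : ℝ) / ((k : ℝ) - 2)) * (2 * (outDeg D v : ℝ) - (M.degree v : ℝ))) := by
  have hk' : (2 : ℝ) < k := by exact_mod_cast hk
  constructor
  · rintro ⟨f, hf⟩
    refine ⟨_, hf.isOrientation_pos, (hf.isOrientation_pos.isBalancedValuation_iff hk').2 ?_⟩
    exact fun X => by exact_mod_cast hf.arcCount_le X
  · rintro ⟨D, hD, hbal⟩
    have hcut (X : Finset V) : arcCount D X Xᶜ ≤ ((k : ℤ) - 1) * arcCount D Xᶜ X := by
      exact_mod_cast (hD.isBalancedValuation_iff hk').1 hbal X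
    obtain ⟨g, hg, hcirc⟩ := Circulation.exists_circulation (fun _ _ => hD.asymm) (by omega) hcut
    exact ⟨g, hg.isNZFlow hD hcirc⟩
end

section
/- A cubic graph G has a nowhere-zero 4-flow if and only if G admits a balanced valuation with values in {−2, +2}. -/
open Finset

variable {V : Type*} [Fintype V] [DecidableEq V]

set_option linter.unusedSectionVars false

namespace NZAux

def ex (g : V → V → ℤ) (v : V) : ℤ := ∑ u, g v u

lemma sum_sum_skew (g : V → V → ℤ) (hg : ∀ v u, g v u = - g u v) (R : Finset V) :
    ∑ v ∈ R, ∑ u ∈ R, g v u = 0 := by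
  have h1 : ∑ v ∈ R, ∑ u ∈ R, g v u = ∑ v ∈ R, ∑ u ∈ R, -(g u v) := by
    refine Finset.sum_congr rfl fun v _ => Finset.sum_congr rfl fun u _ => hg v u
  have h2 : ∑ v ∈ R, ∑ u ∈ R, g u v = ∑ v ∈ R, ∑ u ∈ R, g v u := Finset.sum_comm
  have h3 : ∑ v ∈ R, ∑ u ∈ R, -(g u v) = - ∑ v ∈ R, ∑ u ∈ R, g u v := by
    simp
  linarith

/-- Sum of excesses over `R` equals the flow across the cut. -/
lemma sum_ex_eq_cut (g : V → V → ℤ) (hg : ∀ v u, g v u = - g u v) (R : Finset V) :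
    ∑ v ∈ R, ex g v = ∑ v ∈ R, ∑ u ∈ Rᶜ, g v u := by
  have h : ∀ v, ex g v = (∑ u ∈ R, g v u) + ∑ u ∈ Rᶜ, g v u := by
    intro v; rw [ex, ← Finset.sum_add_sum_compl R]
  calc ∑ v ∈ R, ex g v = ∑ v ∈ R, ((∑ u ∈ R, g v u) + ∑ u ∈ Rᶜ, g v u) :=
        Finset.sum_congr rfl fun v _ => h v
    _ = (∑ v ∈ R, ∑ u ∈ R, g v u) + ∑ v ∈ R, ∑ u ∈ Rᶜ, g v u := Finset.sum_add_distrib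
    _ = ∑ v ∈ R, ∑ u ∈ Rᶜ, g v u := by rw [sum_sum_skew g hg R]; ring

lemma sum_ex_univ (g : V → V → ℤ) (hg : ∀ v u, g v u = - g u v) :
    ∑ v, ex g v = 0 := by
  have := sum_ex_eq_cut g hg Finset.univ
  simpa using this

/-- Feasible function: skew, within bounds `[lo v u, -lo u v]`, congruent to `lo` mod `δ`. -/
def Feas (lo : V → V → ℤ) (δ : ℕ) (g : V → V → ℤ) : Prop :=
  (∀ v u, g v u = - g u v) ∧ (∀ v u, lo v u ≤ g v u ∧ g v u ≤ - lo u v) ∧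
  (∀ v u, (δ : ℤ) ∣ (g v u - lo v u))

def Phi (t : V → ℤ) (g : V → V → ℤ) : ℤ := ∑ v, |ex g v - t v|

lemma Phi_nonneg (t : V → ℤ) (g : V → V → ℤ) : 0 ≤ Phi t g :=
  Finset.sum_nonneg fun v _ => abs_nonneg _

def Step (G : SimpleGraph V) (lo : V → V → ℤ) (δ : ℕ) (g : V → V → ℤ) (x y : V) : Prop :=
  G.Adj x y ∧ lo x y ≤ g x y - δ

def Walk (G : SimpleGraph V) (lo : V → V → ℤ) (δ : ℕ) (g : V → V → ℤ) :
    ℕ → V → V → Prop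
  | 0, a, b => a = b
  | n+1, a, b => ∃ x, Step G lo δ g a x ∧ Walk G lo δ g n x b

def WalkA (G : SimpleGraph V) (lo : V → V → ℤ) (δ : ℕ) (g : V → V → ℤ) (a x : V) :
    ℕ → V → V → Prop
  | 0, c, b => c = b
  | n+1, c, b => ∃ y, Step G lo δ g c y ∧ ¬(c = a ∧ y = x) ∧ WalkA G lo δ g a x n y b

section Hoffman

variable (G : SimpleGraph V) (lo : V → V → ℤ) (δ : ℕ) (t : V → ℤ)

lemma walk_snoc {g : V → V → ℤ} :
    ∀ {n a v y}, Walk G lo δ g n a v → Step G lo δ g v y → Walk G lo δ g (n+1) a y := by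
  intro n
  induction n with
  | zero => intro a v y hw hs; cases hw; exact ⟨y, hs, rfl⟩
  | succ n IH =>
      rintro a v y ⟨x, hsx, hw⟩ hs
      exact ⟨x, hsx, IH hw hs⟩

lemma extract {g : V → V → ℤ} (a x b : V) :
    ∀ n c, Walk G lo δ g n c b →
      (∃ m ≤ n, WalkA G lo δ g a x m c b) ∨ (∃ m < n, Walk G lo δ g m x b) := by
  intro n
  induction n with
  | zero => intro c h; exact Or.inl ⟨0, le_rfl, h⟩
  | succ n IH =>
      rintro c ⟨y, hs, hw⟩
      by_cases hcy : c = a ∧ y = x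
      · right
        refine ⟨n, Nat.lt_succ_self n, ?_⟩
        rw [← hcy.2]; exact hw
      · rcases IH y hw with ⟨m, hm, hA⟩ | ⟨m, hm, hW⟩
        · exact Or.inl ⟨m + 1, Nat.succ_le_succ hm, ⟨y, hs, hcy, hA⟩⟩
        · exact Or.inr ⟨m, Nat.lt_succ_of_lt hm, hW⟩

/-- The push operation along an ordered pair: decrease `g a x` by `δ` (and fix skewness). -/
def push (δ : ℕ) (g : V → V → ℤ) (a x : V) : V → V → ℤ := fun v u =>
  g v u - (δ : ℤ) * (if v = a then 1 else 0) * (if u = x then 1 else 0)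
    + (δ : ℤ) * (if v = x then 1 else 0) * (if u = a then 1 else 0)

variable {G lo δ}

lemma push_skew {g : V → V → ℤ} (hskew : ∀ v u, g v u = - g u v) (a x : V) :
    ∀ v u, push δ g a x v u = - push δ g a x u v := by
  intro v u
  have := hskew v u
  simp only [push]
  ring_nf
  linarith [hskew v u]

lemma push_apply_ax {g : V → V → ℤ} {a x : V} (hax : a ≠ x) :
    push δ g a x a x = g a x - δ := by
  simp [push, hax, Ne.symm hax]

lemma push_apply_xa {g : V → V → ℤ} {a x : V} (hax : a ≠ x) :
    push δ g a x x a = g x a + δ := by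
  simp [push, hax, Ne.symm hax]

lemma push_apply_other {g : V → V → ℤ} {a x v u : V}
    (h1 : ¬(v = a ∧ u = x)) (h2 : ¬(v = x ∧ u = a)) :
    push δ g a x v u = g v u := by
  by_cases hva : v = a <;> by_cases hux : u = x <;> by_cases hvx : v = x <;>
    by_cases hua : u = a <;> simp_all [push] <;> tauto

lemma push_feas {g : V → V → ℤ} (hg : Feas lo δ g) {a x : V} (hax : a ≠ x)
    (hs : Step G lo δ g a x) : Feas lo δ (push δ g a x) := by
  obtain ⟨hskew, hbd, hdvd⟩ := hg
  refine ⟨push_skew hskew a x, ?_, ?_⟩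
  · intro v u
    by_cases h1 : v = a ∧ u = x
    · obtain ⟨rfl, rfl⟩ := h1
      rw [push_apply_ax hax]
      have h01 := hbd v u
      have h02 := hs.2
      constructor
      · linarith
      · have : (0:ℤ) ≤ (δ:ℤ) := Int.natCast_nonneg δ
        linarith
    · by_cases h2 : v = x ∧ u = a
      · obtain ⟨rfl, rfl⟩ := h2
        rw [push_apply_xa hax]
        have h01 := hbd v u
        have h02 := hs.2
        have h03 : g u v = - g v u := hskew u v
        have : (0:ℤ) ≤ (δ:ℤ) := Int.natCast_nonneg δ
        constructor
        · linarith
        · linarith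
      · rw [push_apply_other h1 h2]; exact hbd v u
  · intro v u
    by_cases h1 : v = a ∧ u = x
    · obtain ⟨rfl, rfl⟩ := h1
      rw [push_apply_ax hax]
      have h5 : g v u - ↑δ - lo v u = (g v u - lo v u) - δ := by ring
      rw [h5]
      exact dvd_sub (hdvd v u) ⟨1, by ring⟩
    · by_cases h2 : v = x ∧ u = a
      · obtain ⟨rfl, rfl⟩ := h2
        rw [push_apply_xa hax]
        have h5 : g v u + ↑δ - lo v u = (g v u - lo v u) + δ := by ring
        rw [h5]
        exact dvd_add (hdvd v u) ⟨1, by ring⟩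
      · rw [push_apply_other h1 h2]; exact hdvd v u

lemma push_ex {g : V → V → ℤ} (a x : V) (v : V) :
    ex (push δ g a x) v
      = ex g v - (δ:ℤ) * (if v = a then 1 else 0) + (δ:ℤ) * (if v = x then 1 else 0) := by
  have hz : ∀ c : V, (∑ u : V, (if u = c then (1:ℤ) else 0)) = 1 := fun c => by simp
  simp only [ex, push]
  rw [Finset.sum_add_distrib, Finset.sum_sub_distrib, ← Finset.mul_sum, ← Finset.mul_sum,
    hz x, hz a, mul_one, mul_one]

lemma push_ex_a {g : V → V → ℤ} {a x : V} (hax : a ≠ x) :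
    ex (push δ g a x) a = ex g a - δ := by
  rw [push_ex a x a]; simp [hax]

lemma push_ex_x {g : V → V → ℤ} {a x : V} (hax : a ≠ x) :
    ex (push δ g a x) x = ex g x + δ := by
  rw [push_ex a x x]; simp [Ne.symm hax]

lemma push_ex_other {g : V → V → ℤ} {a x v : V} (hva : v ≠ a) (hvx : v ≠ x) :
    ex (push δ g a x) v = ex g v := by
  rw [push_ex a x v]; simp [hva, hvx]

lemma walk_zero_iff {g : V → V → ℤ} {a b : V} : Walk G lo δ g 0 a b ↔ a = b := Iff.rfl

lemma walk_succ_iff {g : V → V → ℤ} {n : ℕ} {a b : V} :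
    Walk G lo δ g (n+1) a b ↔ ∃ x, Step G lo δ g a x ∧ Walk G lo δ g n x b := Iff.rfl

lemma push_ge {g : V → V → ℤ} {a x v u : V} (h1 : ¬(v = a ∧ u = x)) :
    g v u ≤ push δ g a x v u := by
  by_cases h2 : v = x ∧ u = a
  · have hax : a ≠ x := by
      rintro rfl
      exact h1 h2
    rw [h2.1, h2.2, push_apply_xa hax]
    linarith [Int.natCast_nonneg δ]
  · rw [push_apply_other h1 h2]

lemma walkA_push {g : V → V → ℤ} {a x b : V} :
    ∀ {n c}, WalkA G lo δ g a x n c b → Walk G lo δ (push δ g a x) n c b := by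
  intro n
  induction n with
  | zero => intro c h; exact h
  | succ n IH =>
      rintro c ⟨y, hs, hne, hA⟩
      refine ⟨y, ⟨hs.1, ?_⟩, IH hA⟩
      have h1 := push_ge (δ := δ) (g := g) (a := a) (x := x) hne
      linarith [hs.2]

lemma abs_push_helper {d e : ℤ} (he : 0 < e) (h : |d| + e ≤ |d + e|) : 0 ≤ d := by
  rcases abs_cases d with ⟨h1, h2⟩ | ⟨h1, h2⟩ <;> rcases abs_cases (d + e) with ⟨h3, h4⟩ | ⟨h3, h4⟩ <;>
    linarith

lemma Phi_push_eq {g : V → V → ℤ} {a x : V} (hax : a ≠ x) :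
    Phi t (push δ g a x) - Phi t g
      = (|ex g a - δ - t a| - |ex g a - t a|) + (|ex g x + δ - t x| - |ex g x - t x|) := by
  have key : Phi t (push δ g a x) - Phi t g
      = ∑ v, (|ex (push δ g a x) v - t v| - |ex g v - t v|) := by
    rw [Phi, Phi, ← Finset.sum_sub_distrib]
  rw [key]
  rw [← Finset.sum_subset (Finset.subset_univ ({a, x} : Finset V))
    (fun v _ hv => by
      have hva : v ≠ a := fun h => hv (by simp [h])
      have hvx : v ≠ x := fun h => hv (by simp [h])
      rw [push_ex_other hva hvx]; ring)]
  rw [Finset.sum_pair hax, push_ex_a hax, push_ex_x hax]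

lemma no_aug (hδ : 0 < δ)
    (hdvd_t : ∀ g, Feas lo δ g → ∀ v, (δ:ℤ) ∣ (ex g v - t v)) :
    ∀ n (g : V → V → ℤ), Feas lo δ g → (∀ g', Feas lo δ g' → Phi t g ≤ Phi t g') →
      ∀ a b, t a < ex g a → ex g b < t b → Walk G lo δ g n a b → False := by
  intro n
  induction n using Nat.strong_induction_on with
  | _ n IH =>
    intro g hg hmin a b ha hb hwalk
    match n, hwalk with
    | 0, hwalk =>
        have hab : a = b := hwalk
        subst hab; linarith
    | Nat.succ n, hwalk =>
        obtain ⟨x, hs, hw⟩ := hwalk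
        have hax : a ≠ x := fun h => (G.irrefl (h ▸ hs.1))
        rcases extract (G := G) (lo := lo) (δ := δ) a x b n x hw with ⟨m, hm, hA⟩ | ⟨m, hm, hW⟩
        · -- avoid case: push and recurse
          set g' := push δ g a x with hg'
          have hfeas' : Feas lo δ g' := push_feas hg hax hs
          have hda : (δ:ℤ) ≤ ex g a - t a :=
            Int.le_of_dvd (by linarith) (hdvd_t g hg a)
          have habs_a : |ex g a - ↑δ - t a| - |ex g a - t a| = -δ := by
            rw [abs_of_nonneg (by linarith), abs_of_nonneg (by linarith)]; ring
          have hPhile : Phi t g' ≤ Phi t g := by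
            have := Phi_push_eq (δ := δ) (t := t) (g := g) hax
            have habs_x : |ex g x + ↑δ - t x| - |ex g x - t x| ≤ δ := by
              have h1 : |ex g x + ↑δ - t x| ≤ |ex g x - t x| + |(δ:ℤ)| := by
                have : ex g x + ↑δ - t x = (ex g x - t x) + δ := by ring
                rw [this]; exact abs_add_le _ _
              have h2 : |(δ:ℤ)| = δ := abs_of_nonneg (Int.natCast_nonneg δ)
              linarith
            linarith
          have hPhige : Phi t g ≤ Phi t g' := hmin g' hfeas'
          have hPhieq : Phi t g' = Phi t g := le_antisymm hPhile hPhige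
          -- x is not deficient
          have hxs : 0 ≤ ex g x - t x := by
            have := Phi_push_eq (δ := δ) (t := t) (g := g) hax
            have habs_x : |ex g x - t x| + δ ≤ |ex g x + ↑δ - t x| := by
              rw [hPhieq] at this
              rw [habs_a] at this
              have : |ex g x + ↑δ - t x| - |ex g x - t x| = δ := by linarith
              linarith
            have heq : ex g x + ↑δ - t x = (ex g x - t x) + δ := by ring
            rw [heq] at habs_x
            exact abs_push_helper (by exact_mod_cast hδ) habs_x
          by_cases hxb : x = b
          · subst hxb; linarith
          · have hmin' : ∀ g'', Feas lo δ g'' → Phi t g' ≤ Phi t g'' := by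
              intro g'' h; rw [hPhieq]; exact hmin g'' h
            have hb' : ex g' b < t b := by
              have hba : b ≠ a := fun h => by subst h; linarith
              rw [hg', push_ex_other hba (fun h => hxb h.symm)]
              exact hb
            have hx' : t x < ex g' x := by
              rw [hg', push_ex_x hax]
              have : (0:ℤ) < δ := by exact_mod_cast hδ
              linarith
            exact IH m (Nat.lt_succ_of_le hm) g' hfeas' hmin' x b hx' hb' (walkA_push hA)
        · -- shortcut case
          exact IH (m + 1) (Nat.succ_lt_succ hm) g hg hmin a b ha hb ⟨x, hs, hW⟩

theorem hoffman_main (hzero : ∀ v u, ¬ G.Adj v u → lo v u = 0)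
    (hδ : 0 < δ) (g0 : V → V → ℤ) (hg0 : Feas lo δ g0)
    (ht : ∀ v, (δ:ℤ) ∣ (ex g0 v - t v))
    (hsum : ∑ v, t v = 0)
    (hcert : ∀ R : Finset V, ∑ v ∈ R, ∑ u ∈ Rᶜ, lo v u ≤ ∑ v ∈ R, t v) :
    ∃ g, Feas lo δ g ∧ ∀ v, ex g v = t v := by
  classical
  have hdvd_t : ∀ g, Feas lo δ g → ∀ v, (δ:ℤ) ∣ (ex g v - t v) := by
    intro g hg v
    have h1 : (δ:ℤ) ∣ ex g v - ex g0 v := by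
      rw [ex, ex, ← Finset.sum_sub_distrib]
      refine Finset.dvd_sum fun u _ => ?_
      have e : g v u - g0 v u = (g v u - lo v u) - (g0 v u - lo v u) := by ring
      rw [e]; exact dvd_sub (hg.2.2 v u) (hg0.2.2 v u)
    have h2 := dvd_add h1 (ht v)
    have e2 : ex g v - ex g0 v + (ex g0 v - t v) = ex g v - t v := by ring
    rwa [e2] at h2
  have hex : ∃ n : ℕ, ∃ g, Feas lo δ g ∧ (Phi t g).toNat = n := ⟨_, g0, hg0, rfl⟩
  obtain ⟨g, hg, hgn⟩ := Nat.find_spec hex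
  have hmin : ∀ g', Feas lo δ g' → Phi t g ≤ Phi t g' := by
    intro g' hg'
    have h1 : Nat.find hex ≤ (Phi t g').toNat := Nat.find_min' hex ⟨g', hg', rfl⟩
    rw [← hgn] at h1
    have h2 := Int.toNat_of_nonneg (Phi_nonneg t g)
    have h3 := Int.toNat_of_nonneg (Phi_nonneg t g')
    omega
  by_cases h0 : Phi t g = 0
  · refine ⟨g, hg, fun v => ?_⟩
    have hz := (Finset.sum_eq_zero_iff_of_nonneg
      (fun v (_ : v ∈ Finset.univ) => abs_nonneg (ex g v - t v))).1 h0 v (Finset.mem_univ v)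
    have := abs_eq_zero.1 hz
    linarith
  · exfalso
    have hPhipos : 0 < Phi t g :=
      lt_of_le_of_ne (Phi_nonneg t g) (Ne.symm h0)
    have hsumd : ∑ v, (ex g v - t v) = 0 := by
      rw [Finset.sum_sub_distrib, sum_ex_univ g hg.1, hsum]; ring
    have ha : ∃ a, t a < ex g a := by
      by_contra hno
      push_neg at hno
      have hz : ∀ v ∈ Finset.univ, t v - ex g v = 0 := by
        refine (Finset.sum_eq_zero_iff_of_nonneg (fun v _ => by linarith [hno v])).1 ?_
        have : ∑ v, (t v - ex g v) = - ∑ v, (ex g v - t v) := by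
          rw [← Finset.sum_neg_distrib]
          exact Finset.sum_congr rfl fun v _ => by ring
        rw [this, hsumd]; ring
      have : Phi t g = 0 := by
        rw [Phi]
        refine Finset.sum_eq_zero fun v _ => ?_
        have := hz v (Finset.mem_univ v)
        have : ex g v - t v = 0 := by linarith
        rw [this, abs_zero]
      exact h0 this
    obtain ⟨a, ha⟩ := ha
    let R : Finset V := Finset.univ.filter (fun v => ∃ n, Walk G lo δ g n a v)
    have haR : a ∈ R := Finset.mem_filter.2 ⟨Finset.mem_univ a, 0, rfl⟩
    have hnotdef : ∀ v ∈ R, t v ≤ ex g v := by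
      intro v hv
      by_contra hlt
      push_neg at hlt
      obtain ⟨n, hw⟩ := (Finset.mem_filter.1 hv).2
      exact no_aug (G := G) (lo := lo) (δ := δ) t hδ hdvd_t n g hg hmin a v ha hlt hw
    have hcut : ∀ v ∈ R, ∀ u ∈ Rᶜ, g v u = lo v u := by
      intro v hv u hu
      by_cases hadj : G.Adj v u
      · have hnostep : ¬ Step G lo δ g v u := by
          intro hstep
          obtain ⟨n, hw⟩ := (Finset.mem_filter.1 hv).2
          have : u ∈ R := Finset.mem_filter.2 ⟨Finset.mem_univ u, n+1, walk_snoc G lo δ hw hstep⟩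
          exact (Finset.mem_compl.1 hu) this
        have h1 : g v u - δ < lo v u := by
          by_contra hh
          push_neg at hh
          exact hnostep ⟨hadj, hh⟩
        have h2 := (hg.2.1 v u).1
        obtain ⟨c, hc⟩ := hg.2.2 v u
        have hδZ : (0:ℤ) < δ := by exact_mod_cast hδ
        have hc0 : (0:ℤ) ≤ (δ:ℤ) * c := by rw [← hc]; linarith
        have hc1 : (δ:ℤ) * c < δ := by rw [← hc]; linarith
        have hcge : 0 ≤ c := nonneg_of_mul_nonneg_right hc0 hδZ
        have hclt : c < 1 := by nlinarith
        have : c = 0 := by omega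
        rw [this, mul_zero] at hc
        linarith
      · have hadj' : ¬ G.Adj u v := fun h => hadj h.symm
        have h1 := (hg.2.1 v u).1
        have h2 := (hg.2.1 v u).2
        rw [hzero v u hadj] at h1 ⊢
        rw [hzero u v hadj'] at h2
        linarith
    have hsR : ∑ v ∈ R, ex g v = ∑ v ∈ R, ∑ u ∈ Rᶜ, lo v u := by
      rw [sum_ex_eq_cut g hg.1 R]
      exact Finset.sum_congr rfl fun v hv => Finset.sum_congr rfl fun u hu => hcut v hv u hu
    have hlt : ∑ v ∈ R, t v < ∑ v ∈ R, ex g v :=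
      Finset.sum_lt_sum hnotdef ⟨a, haR, ha⟩
    have := hcert R
    linarith [hsR]

end Hoffman


open Classical in
lemma cutCard_eq_pairs (G : SimpleGraph V) (X : Finset V) :
    (G.cutCard X : ℤ) = ∑ v ∈ X, ∑ u ∈ Xᶜ, (if G.Adj v u then (1:ℤ) else 0) := by
  classical
  have hset : {e ∈ G.edgeSet | ∃ x y : V, e = s(x, y) ∧ x ∈ X ∧ y ∉ X}
      = ↑(((X ×ˢ Xᶜ).filter (fun p => G.Adj p.1 p.2)).image (fun p => s(p.1, p.2))) := by
    ext e
    simp only [Set.mem_setOf_eq, Finset.coe_image, Set.mem_image, Finset.mem_coe,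
      Finset.mem_filter, Finset.mem_product, Finset.mem_compl]
    constructor
    · rintro ⟨he, x, y, rfl, hx, hy⟩
      exact ⟨(x, y), ⟨⟨hx, hy⟩, G.mem_edgeSet.1 he⟩, rfl⟩
    · rintro ⟨⟨x, y⟩, ⟨⟨hx, hy⟩, hadj⟩, rfl⟩
      exact ⟨G.mem_edgeSet.2 hadj, x, y, rfl, hx, hy⟩
  have hinj : Set.InjOn (fun p : V × V => s(p.1, p.2))
      ↑((X ×ˢ Xᶜ).filter (fun p => G.Adj p.1 p.2)) := by
    rintro ⟨x, y⟩ hxy ⟨x', y'⟩ hxy' heq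
    simp only [Finset.coe_filter, Set.mem_setOf_eq, Finset.mem_product,
      Finset.mem_compl] at hxy hxy'
    rcases Sym2.eq_iff.1 heq with ⟨rfl, rfl⟩ | ⟨rfl, rfl⟩
    · rfl
    · exact absurd hxy.1.1 hxy'.1.2
  have hcard : G.cutCard X = ((X ×ˢ Xᶜ).filter (fun p => G.Adj p.1 p.2)).card := by
    rw [SimpleGraph.cutCard, hset, Set.ncard_coe_finset,
      Finset.card_image_of_injOn (by exact_mod_cast hinj)]
  rw [hcard]
  rw [← Finset.sum_boole]
  push_cast
  rw [Finset.sum_product]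


open Classical in
lemma degree_sum (G : SimpleGraph V) (hcubic : ∀ v, (G.neighborSet v).ncard = 3) (v : V) :
    ∑ u, (if G.Adj v u then (1:ℤ) else 0) = 3 := by
  classical
  rw [Finset.sum_boole]
  have hset : G.neighborSet v = ↑(Finset.univ.filter (fun u => G.Adj v u)) := by
    ext u; simp [SimpleGraph.mem_neighborSet]
  have := hcubic v
  rw [hset, Set.ncard_coe_finset] at this
  rw [this]
  norm_num

theorem forward (G : SimpleGraph V) (hcubic : ∀ v, (G.neighborSet v).ncard = 3)
    (f : V → V → ℤ) (hf : G.IsNZFlow 4 f) :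
    ∃ w : V → ℝ, G.IsBalancedValuation w ∧ ∀ v, w v = 2 ∨ w v = -2 := by
  classical
  obtain ⟨hskew, hsupp, hcons, hbound⟩ := hf
  have hbound3 : ∀ v u, G.Adj v u → 1 ≤ |f v u| ∧ |f v u| ≤ 3 := by
    intro v u h
    have := hbound v u h
    constructor
    · exact this.1
    · have h2 := this.2
      have : ((4:ℕ):ℤ) - 1 = 3 := by norm_num
      linarith [this ▸ h2]
  have hne : ∀ v u, G.Adj v u → f v u ≠ 0 := by
    intro v u hadj h0
    have := (hbound3 v u hadj).1
    rw [h0, abs_zero] at this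
    linarith
  obtain ⟨ip, hip⟩ : ∃ ip : V → V → ℤ, ip = fun v u => if 0 < f v u then 1 else 0 := ⟨_, rfl⟩
  obtain ⟨im, him⟩ : ∃ im : V → V → ℤ, im = fun v u => if f v u < 0 then 1 else 0 := ⟨_, rfl⟩
  obtain ⟨d, hd⟩ : ∃ d : V → V → ℤ, d = fun v u => ip v u - im v u := ⟨_, rfl⟩
  obtain ⟨σ, hσ⟩ : ∃ σ : V → ℤ, σ = fun v => ex d v := ⟨_, rfl⟩
  have hipnn : ∀ v u, 0 ≤ ip v u := by intro v u; simp only [hip]; split <;> norm_num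
  have himnn : ∀ v u, 0 ≤ im v u := by intro v u; simp only [him]; split <;> norm_num
  have hipim : ∀ v u, ip v u + im v u = if G.Adj v u then (1:ℤ) else 0 := by
    intro v u
    by_cases hadj : G.Adj v u
    · rcases lt_trichotomy (f v u) 0 with h | h | h
      · simp [hip, him, h, not_lt.2 (le_of_lt h), hadj]
      · exact absurd h (hne v u hadj)
      · simp [hip, him, h, not_lt.2 (le_of_lt h), hadj]
    · have h0 : f v u = 0 := hsupp v u hadj
      simp [hip, him, h0, hadj]
  have hdskew : ∀ v u, d v u = - d u v := by
    intro v u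
    have h1 : f u v = - f v u := hskew u v
    simp only [hd, hip, him, h1]
    rcases lt_trichotomy (f v u) 0 with h | h | h
    · simp [h, not_lt.2 (le_of_lt h), neg_pos.2 h, not_lt.2 (le_of_lt (neg_pos.2 h))]
    · simp [h]
    · have h2 : ¬ (0 < -f v u) := by linarith
      have h3 : -f v u < 0 := by linarith
      simp [h, not_lt.2 (le_of_lt h), h2, h3]
  have hσval : ∀ v, σ v = 1 ∨ σ v = -1 := by
    intro v
    have h3 : (∑ u, ip v u) + (∑ u, im v u) = 3 := by
      rw [← Finset.sum_add_distrib,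
        Finset.sum_congr rfl fun u _ => hipim v u]
      exact degree_sum G hcubic v
    have hponder : ∀ (hall : ∀ u ∈ Finset.univ, f v u = 0), False := by
      intro hall
      have hnoadj : ∀ u, ¬ G.Adj v u := fun u hadj => hne v u hadj (hall u (Finset.mem_univ u))
      have h30 : (3:ℤ) = 0 := by
        rw [← degree_sum G hcubic v]
        exact Finset.sum_eq_zero fun u _ => if_neg (hnoadj u)
      norm_num at h30
    have hp1 : 1 ≤ ∑ u, ip v u := by
      by_contra hc
      push_neg at hc
      have hz : ∑ u, ip v u = 0 :=
        le_antisymm (by omega) (Finset.sum_nonneg fun u _ => hipnn v u)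
      have hallz : ∀ u, ip v u = 0 :=
        fun u => (Finset.sum_eq_zero_iff_of_nonneg fun u _ => hipnn v u).1 hz u (Finset.mem_univ u)
      have hnp : ∀ u, f v u ≤ 0 := by
        intro u
        by_contra hpos
        push_neg at hpos
        have h5 := hallz u
        rw [hip] at h5
        simp [hpos] at h5
      exact hponder ((Finset.sum_eq_zero_iff_of_nonpos fun u _ => hnp u).1 (hcons v))
    have hm1 : 1 ≤ ∑ u, im v u := by
      by_contra hc
      push_neg at hc
      have hz : ∑ u, im v u = 0 :=
        le_antisymm (by omega) (Finset.sum_nonneg fun u _ => himnn v u)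
      have hallz : ∀ u, im v u = 0 :=
        fun u => (Finset.sum_eq_zero_iff_of_nonneg fun u _ => himnn v u).1 hz u (Finset.mem_univ u)
      have hnp : ∀ u, 0 ≤ f v u := by
        intro u
        by_contra hpos
        push_neg at hpos
        have h5 := hallz u
        rw [him] at h5
        simp [hpos] at h5
      exact hponder ((Finset.sum_eq_zero_iff_of_nonneg fun u _ => hnp u).1 (hcons v))
    have hσeq : σ v = (∑ u, ip v u) - ∑ u, im v u := by
      rw [hσ]
      simp only [ex, hd]
      rw [Finset.sum_sub_distrib]
    omega
  refine ⟨fun v => 2 * ((σ v : ℤ) : ℝ), ?_, ?_⟩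
  swap
  · intro v
    rcases hσval v with h | h
    · left; show 2 * ((σ v : ℤ) : ℝ) = 2; rw [h]; norm_num
    · right; show 2 * ((σ v : ℤ) : ℝ) = -2; rw [h]; norm_num
  intro X
  have hEp : ∑ v ∈ X, σ v = (∑ v ∈ X, ∑ u ∈ Xᶜ, ip v u) - ∑ v ∈ X, ∑ u ∈ Xᶜ, im v u := by
    rw [hσ, sum_ex_eq_cut d hdskew X, ← Finset.sum_sub_distrib]
    refine Finset.sum_congr rfl fun v _ => ?_
    rw [← Finset.sum_sub_distrib]
    exact Finset.sum_congr rfl fun u _ => by rw [hd]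
  have hcut0 : ∑ v ∈ X, ∑ u ∈ Xᶜ, f v u = 0 := by
    rw [← sum_ex_eq_cut f hskew X]
    exact Finset.sum_eq_zero fun v _ => hcons v
  have hFN : (∑ v ∈ X, ∑ u ∈ Xᶜ, (if 0 < f v u then f v u else 0))
      + (∑ v ∈ X, ∑ u ∈ Xᶜ, (if f v u < 0 then f v u else 0)) = 0 := by
    have hpoint : (∑ v ∈ X, ∑ u ∈ Xᶜ, (if 0 < f v u then f v u else 0))
        + (∑ v ∈ X, ∑ u ∈ Xᶜ, (if f v u < 0 then f v u else 0))
        = ∑ v ∈ X, ∑ u ∈ Xᶜ, f v u := by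
      rw [← Finset.sum_add_distrib]
      refine Finset.sum_congr rfl fun v _ => ?_
      rw [← Finset.sum_add_distrib]
      refine Finset.sum_congr rfl fun u _ => ?_
      rcases lt_trichotomy (f v u) 0 with h | h | h
      · rw [if_neg (not_lt.2 (le_of_lt h)), if_pos h]; ring
      · rw [if_neg (not_lt.2 (le_of_eq h.symm)), if_neg (not_lt.2 (le_of_eq h)), h]; ring
      · rw [if_pos h, if_neg (not_lt.2 (le_of_lt h))]; ring
    rw [hpoint, hcut0]
  have hbound' : ∀ v u, (ip v u ≤ (if 0 < f v u then f v u else 0)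
      ∧ (if 0 < f v u then f v u else 0) ≤ 3 * ip v u)
      ∧ (im v u ≤ -(if f v u < 0 then f v u else 0)
      ∧ -(if f v u < 0 then f v u else 0) ≤ 3 * im v u) := by
    intro v u
    by_cases hadj : G.Adj v u
    · have hb := hbound3 v u hadj
      rcases lt_trichotomy (f v u) 0 with h | h | h
      · have habs : |f v u| = - f v u := abs_of_neg h
        rw [habs] at hb
        rw [hip, him]
        simp only [if_neg (not_lt.2 (le_of_lt h)), if_pos h]
        refine ⟨⟨by norm_num, by norm_num⟩, by constructor <;> linarith [hb.1, hb.2]⟩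
      · exact absurd h (hne v u hadj)
      · have habs : |f v u| = f v u := abs_of_pos h
        rw [habs] at hb
        rw [hip, him]
        simp only [if_pos h, if_neg (not_lt.2 (le_of_lt h))]
        refine ⟨by constructor <;> linarith [hb.1, hb.2], ⟨by norm_num, by norm_num⟩⟩
    · have h0 : f v u = 0 := hsupp v u hadj
      rw [hip, him]
      simp [h0]
  have hsum2 : ∀ (q : V → V → ℤ), ∑ v ∈ X, ∑ u ∈ Xᶜ, 3 * q v u
      = 3 * ∑ v ∈ X, ∑ u ∈ Xᶜ, q v u := by
    intro q
    rw [Finset.mul_sum]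
    exact Finset.sum_congr rfl fun v _ => (Finset.mul_sum _ _ _).symm
  have hFb1 : ∑ v ∈ X, ∑ u ∈ Xᶜ, ip v u ≤ ∑ v ∈ X, ∑ u ∈ Xᶜ, (if 0 < f v u then f v u else 0) :=
    Finset.sum_le_sum fun v _ => Finset.sum_le_sum fun u _ => ((hbound' v u).1).1
  have hFb2 : ∑ v ∈ X, ∑ u ∈ Xᶜ, (if 0 < f v u then f v u else 0)
      ≤ 3 * ∑ v ∈ X, ∑ u ∈ Xᶜ, ip v u := by
    rw [← hsum2 ip]
    exact Finset.sum_le_sum fun v _ => Finset.sum_le_sum fun u _ => ((hbound' v u).1).2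
  have hneg : ∑ v ∈ X, ∑ u ∈ Xᶜ, -(if f v u < 0 then f v u else 0)
      = -∑ v ∈ X, ∑ u ∈ Xᶜ, (if f v u < 0 then f v u else 0) := by
    rw [← Finset.sum_neg_distrib]
    exact Finset.sum_congr rfl fun v _ => by rw [← Finset.sum_neg_distrib]
  have hNb1 : ∑ v ∈ X, ∑ u ∈ Xᶜ, im v u
      ≤ -∑ v ∈ X, ∑ u ∈ Xᶜ, (if f v u < 0 then f v u else 0) := by
    rw [← hneg]
    exact Finset.sum_le_sum fun v _ => Finset.sum_le_sum fun u _ => ((hbound' v u).2).1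
  have hNb2 : -∑ v ∈ X, ∑ u ∈ Xᶜ, (if f v u < 0 then f v u else 0)
      ≤ 3 * ∑ v ∈ X, ∑ u ∈ Xᶜ, im v u := by
    rw [← hneg, ← hsum2 im]
    exact Finset.sum_le_sum fun v _ => Finset.sum_le_sum fun u _ => ((hbound' v u).2).2
  have hcutge : (∑ v ∈ X, ∑ u ∈ Xᶜ, ip v u) + (∑ v ∈ X, ∑ u ∈ Xᶜ, im v u)
      ≤ (G.cutCard X : ℤ) := by
    rw [cutCard_eq_pairs G X, ← Finset.sum_add_distrib]
    refine Finset.sum_le_sum fun v _ => ?_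
    rw [← Finset.sum_add_distrib]
    exact Finset.sum_le_sum fun u _ => le_of_eq (hipim v u)
  have hintineq : |∑ v ∈ X, 2 * σ v| ≤ (G.cutCard X : ℤ) := by
    rw [← Finset.mul_sum, hEp, abs_le]
    constructor <;> nlinarith [hFb1, hFb2, hNb1, hNb2, hFN, hcutge]
  show |∑ v ∈ X, 2 * ((σ v : ℤ) : ℝ)| ≤ ((G.cutCard X : ℕ) : ℝ)
  have hcast : ∑ v ∈ X, 2 * ((σ v : ℤ) : ℝ) = ((∑ v ∈ X, 2 * σ v : ℤ) : ℝ) := by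
    push_cast
    ring
  rw [hcast, ← Int.cast_abs]
  exact_mod_cast hintineq


theorem backward (G : SimpleGraph V) (hcubic : ∀ v, (G.neighborSet v).ncard = 3)
    (w : V → ℝ) (hbal : G.IsBalancedValuation w) (hval : ∀ v, w v = 2 ∨ w v = -2) :
    ∃ f, G.IsNZFlow 4 f := by
  classical
  obtain ⟨σ, hσ⟩ : ∃ σ : V → ℤ, σ = fun v => if w v = 2 then 1 else -1 := ⟨_, rfl⟩
  have hσval : ∀ v, σ v = 1 ∨ σ v = -1 := by
    intro v; rw [hσ]; dsimp only; split <;> simp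
  have hwσ : ∀ v, w v = 2 * ((σ v : ℤ) : ℝ) := by
    intro v
    rcases hval v with h | h
    · rw [hσ]; dsimp only; rw [if_pos h, h]; norm_num
    · rw [hσ]; dsimp only
      have hne2 : w v ≠ 2 := by rw [h]; norm_num
      rw [if_neg hne2, h]; norm_num
  have hbal_int : ∀ X : Finset V,
      2 * |∑ v ∈ X, σ v| ≤ ∑ v ∈ X, ∑ u ∈ Xᶜ, (if G.Adj v u then (1:ℤ) else 0) := by
    intro X
    have h := hbal X
    rw [Finset.sum_congr rfl fun v _ => hwσ v] at h
    have hcast : ∑ v ∈ X, 2 * ((σ v : ℤ) : ℝ) = ((∑ v ∈ X, 2 * σ v : ℤ) : ℝ) := by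
      push_cast; ring
    rw [hcast, ← Int.cast_abs] at h
    have h2 : |∑ v ∈ X, 2 * σ v| ≤ (G.cutCard X : ℤ) := by exact_mod_cast h
    rw [← cutCard_eq_pairs G X]
    calc 2 * |∑ v ∈ X, σ v| = |∑ v ∈ X, 2 * σ v| := by
          rw [← Finset.mul_sum, abs_mul]; norm_num
      _ ≤ (G.cutCard X : ℤ) := h2
  have hsumσ : ∑ v, σ v = 0 := by
    have h := hbal_int Finset.univ
    rw [Finset.compl_univ] at h
    simp only [Finset.sum_empty] at h
    simp only [Finset.sum_empty, Finset.sum_const_zero] at h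
    have h2 : |∑ v, σ v| ≤ 0 := by linarith [abs_nonneg (∑ v, σ v)]
    exact abs_eq_zero.1 (le_antisymm h2 (abs_nonneg _))
  -- rank function
  obtain ⟨r, hrinj⟩ : ∃ r : V → ℕ, Function.Injective r :=
    ⟨fun v => ((Fintype.equivFin V) v : ℕ), fun a b hab =>
      (Fintype.equivFin V).injective (Fin.val_injective hab)⟩
  obtain ⟨ρ, hρ⟩ : ∃ ρ : V → V → ℤ,
      ρ = fun v u => if G.Adj v u then (if r v < r u then (1:ℤ) else -1) else 0 := ⟨_, rfl⟩
  have hρskew : ∀ v u, ρ v u = - ρ u v := by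
    intro v u
    rw [hρ]; dsimp only
    by_cases hadj : G.Adj v u
    · have hne : v ≠ u := G.ne_of_adj hadj
      have hrne : r v ≠ r u := fun hh => hne (hrinj hh)
      rw [if_pos hadj, if_pos hadj.symm]
      rcases lt_trichotomy (r v) (r u) with h | h | h
      · rw [if_pos h, if_neg (by omega)]; try norm_num
      · exact absurd h hrne
      · rw [if_neg (by omega), if_pos h]; try norm_num
    · rw [if_neg hadj, if_neg (fun hh => hadj hh.symm)]; norm_num
  have hdeg := degree_sum G hcubic
  have hparity : ∀ v, (2:ℤ) ∣ (σ v + ex ρ v) := by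
    intro v
    have h1 : (2:ℤ) ∣ ex ρ v - 3 := by
      have e : ex ρ v - 3 = ∑ u, (ρ v u - (if G.Adj v u then (1:ℤ) else 0)) := by
        rw [Finset.sum_sub_distrib, hdeg v]
        rfl
      rw [e]
      refine Finset.dvd_sum fun u _ => ?_
      rw [hρ]; dsimp only
      by_cases hadj : G.Adj v u
      · rw [if_pos hadj, if_pos hadj]
        split
        · simp
        · norm_num
      · rw [if_neg hadj, if_neg hadj]; simp
    have h2 : (2:ℤ) ∣ σ v + 3 := by
      rcases hσval v with h | h <;> rw [h] <;> norm_num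
    have h3 : σ v + ex ρ v = (σ v + 3) + (ex ρ v - 3) := by ring
    rw [h3]
    exact dvd_add h2 h1
  -- Phase 1: orientation with excess σ
  obtain ⟨lo1, hlo1⟩ : ∃ lo1 : V → V → ℤ,
      lo1 = fun v u => if G.Adj v u then (if r v < r u then (0:ℤ) else -2) else 0 := ⟨_, rfl⟩
  obtain ⟨t1, ht1⟩ : ∃ t1 : V → ℤ, t1 = fun v => σ v + ex ρ v := ⟨_, rfl⟩
  have hlo1cases : ∀ v u, lo1 v u = 0 ∨ lo1 v u = -2 := by
    intro v u; rw [hlo1]; dsimp only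
    by_cases hadj : G.Adj v u
    · rw [if_pos hadj]; split
      · left; rfl
      · right; rfl
    · left; rw [if_neg hadj]
  have hfeas0 : Feas lo1 2 (fun _ _ => (0:ℤ)) := by
    refine ⟨fun v u => by norm_num, fun v u => ?_, fun v u => ?_⟩
    · rcases hlo1cases v u with h | h <;> rcases hlo1cases u v with h' | h' <;>
        rw [h, h'] <;> norm_num
    · rcases hlo1cases v u with h | h <;> rw [h] <;> norm_num
  have hphase1 := hoffman_main (G := G) (lo := lo1) (δ := 2) t1
    (by
      intro v u hadj
      rw [hlo1]; dsimp only; rw [if_neg hadj])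
    (by norm_num)
    (fun _ _ => 0) hfeas0
    (by
      intro v
      have hex0 : ex (fun _ _ => (0:ℤ)) v = 0 := by simp [ex]
      rw [hex0, ht1]
      dsimp only
      rw [zero_sub]
      exact dvd_neg.2 (hparity v))
    (by
      rw [ht1]
      dsimp only
      rw [Finset.sum_add_distrib, hsumσ, sum_ex_univ ρ hρskew]
      norm_num)
    (by
      intro R
      have hcc : ∑ v ∈ R, t1 v = (∑ v ∈ R, σ v) + ∑ v ∈ R, ∑ u ∈ Rᶜ, ρ v u := by
        rw [ht1]
        dsimp only
        rw [Finset.sum_add_distrib, sum_ex_eq_cut ρ hρskew R]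
      have hdiff : ∑ v ∈ R, ∑ u ∈ Rᶜ, (ρ v u - lo1 v u)
          = ∑ v ∈ R, ∑ u ∈ Rᶜ, (if G.Adj v u then (1:ℤ) else 0) := by
        refine Finset.sum_congr rfl fun v _ => Finset.sum_congr rfl fun u _ => ?_
        rw [hρ, hlo1]; dsimp only
        by_cases hadj : G.Adj v u
        · rw [if_pos hadj, if_pos hadj, if_pos hadj]; split <;> norm_num
        · rw [if_neg hadj, if_neg hadj, if_neg hadj]; norm_num
      have hsub : ∑ v ∈ R, ∑ u ∈ Rᶜ, (ρ v u - lo1 v u)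
          = (∑ v ∈ R, ∑ u ∈ Rᶜ, ρ v u) - ∑ v ∈ R, ∑ u ∈ Rᶜ, lo1 v u := by
        rw [← Finset.sum_sub_distrib]
        exact Finset.sum_congr rfl fun v _ => by rw [← Finset.sum_sub_distrib]
      have hb := hbal_int R
      have habs1 : -(∑ v ∈ R, ∑ u ∈ Rᶜ, (if G.Adj v u then (1:ℤ) else 0)) ≤ ∑ v ∈ R, σ v := by
        have := neg_abs_le (∑ v ∈ R, σ v)
        have := abs_nonneg (∑ v ∈ R, σ v)
        linarith
      linarith [hcc, hdiff, hsub])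
  obtain ⟨h, hhfeas, hhex⟩ := hphase1
  obtain ⟨η, hη⟩ : ∃ η : V → V → ℤ, η = fun v u => h v u - ρ v u := ⟨_, rfl⟩
  have hηskew : ∀ v u, η v u = - η u v := by
    intro v u
    rw [hη]; dsimp only
    rw [hhfeas.1 v u, hρskew v u]; ring
  have hηex : ∀ v, ex η v = σ v := by
    intro v
    rw [hη]
    have : ex (fun v u => h v u - ρ v u) v = ex h v - ex ρ v := by
      simp only [ex]
      rw [Finset.sum_sub_distrib]
    rw [this, hhex v, ht1]
    dsimp only
    ring
  have hηval : ∀ v u, G.Adj v u → η v u = 1 ∨ η v u = -1 := by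
    intro v u hadj
    have hne : v ≠ u := G.ne_of_adj hadj
    have hrne : r v ≠ r u := fun hh => hne (hrinj hh)
    have hb := hhfeas.2.1 v u
    have hd := hhfeas.2.2 v u
    rw [hη]; dsimp only
    by_cases hlt : r v < r u
    · have hl : lo1 v u = 0 := by rw [hlo1]; dsimp only; rw [if_pos hadj, if_pos hlt]
      have hl' : lo1 u v = -2 := by
        rw [hlo1]; dsimp only; rw [if_pos hadj.symm, if_neg (by omega)]
      rw [hl] at hb hd
      rw [hl'] at hb
      have hρv : ρ v u = 1 := by rw [hρ]; dsimp only; rw [if_pos hadj, if_pos hlt]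
      rw [hρv]
      obtain ⟨c, hc⟩ := hd
      rw [sub_zero] at hc
      have h1 := hb.1
      have h2 := hb.2
      omega
    · have hlt' : r u < r v := by omega
      have hl : lo1 v u = -2 := by rw [hlo1]; dsimp only; rw [if_pos hadj, if_neg hlt]
      have hl' : lo1 u v = 0 := by
        rw [hlo1]; dsimp only; rw [if_pos hadj.symm, if_pos hlt']
      rw [hl] at hb hd
      rw [hl'] at hb
      have hρv : ρ v u = -1 := by rw [hρ]; dsimp only; rw [if_pos hadj, if_neg hlt]
      rw [hρv]
      obtain ⟨c, hc⟩ := hd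
      have h1 := hb.1
      have h2 := hb.2
      omega
  have hηzero : ∀ v u, ¬ G.Adj v u → η v u = 0 := by
    intro v u hadj
    have hb := hhfeas.2.1 v u
    have hl : lo1 v u = 0 := by rw [hlo1]; dsimp only; rw [if_neg hadj]
    have hl' : lo1 u v = 0 := by
      rw [hlo1]; dsimp only; rw [if_neg (fun hh => hadj hh.symm)]
    rw [hl, hl'] at hb
    have hρv : ρ v u = 0 := by rw [hρ]; dsimp only; rw [if_neg hadj]
    rw [hη]; dsimp only
    rw [hρv]
    omega
  -- Phase 2: circulation with bounds [1,3] relative to η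
  obtain ⟨lo2, hlo2⟩ : ∃ lo2 : V → V → ℤ,
      lo2 = fun v u => if G.Adj v u then (if η v u = 1 then (1:ℤ) else -3) else 0 := ⟨_, rfl⟩
  have hfeasη : Feas lo2 1 η := by
    refine ⟨hηskew, fun v u => ?_, fun v u => one_dvd _⟩
    by_cases hadj : G.Adj v u
    · rcases hηval v u hadj with h1 | h1
      · have h2 : η u v = -1 := by rw [hηskew u v, h1]
        have hl : lo2 v u = 1 := by rw [hlo2]; dsimp only; rw [if_pos hadj, if_pos h1]
        have hl' : lo2 u v = -3 := by
          rw [hlo2]; dsimp only; rw [if_pos hadj.symm, if_neg (by rw [h2]; norm_num)]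
        rw [hl, hl', h1]; norm_num
      · have h2 : η u v = 1 := by rw [hηskew u v, h1]; norm_num
        have hl : lo2 v u = -3 := by
          rw [hlo2]; dsimp only; rw [if_pos hadj, if_neg (by rw [h1]; norm_num)]
        have hl' : lo2 u v = 1 := by rw [hlo2]; dsimp only; rw [if_pos hadj.symm, if_pos h2]
        rw [hl, hl', h1]; norm_num
    · have h0 : η v u = 0 := hηzero v u hadj
      have hl : lo2 v u = 0 := by rw [hlo2]; dsimp only; rw [if_neg hadj]
      have hl' : lo2 u v = 0 := by
        rw [hlo2]; dsimp only; rw [if_neg (fun hh => hadj hh.symm)]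
      rw [hl, hl', h0]; norm_num
  have hphase2 := hoffman_main (G := G) (lo := lo2) (δ := 1) (fun _ => (0:ℤ))
    (by
      intro v u hadj
      rw [hlo2]; dsimp only; rw [if_neg hadj])
    (by norm_num)
    η hfeasη
    (fun v => one_dvd _)
    (by simp)
    (by
      intro R
      have hA : ∑ v ∈ R, ∑ u ∈ Rᶜ, η v u = ∑ v ∈ R, σ v := by
        rw [← sum_ex_eq_cut η hηskew R]
        exact Finset.sum_congr rfl fun v _ => hηex v
      have hpt : ∀ v u, lo2 v u = 2 * η v u - (if G.Adj v u then (1:ℤ) else 0) := by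
        intro v u
        by_cases hadj : G.Adj v u
        · rcases hηval v u hadj with h1 | h1 <;>
            rw [hlo2] <;> dsimp only <;> rw [if_pos hadj, if_pos hadj, h1]
          · norm_num
          · norm_num
        · rw [hlo2]; dsimp only
          rw [if_neg hadj, if_neg hadj, hηzero v u hadj]
          norm_num
      have hlo2sum : ∑ v ∈ R, ∑ u ∈ Rᶜ, lo2 v u
          = 2 * (∑ v ∈ R, ∑ u ∈ Rᶜ, η v u)
            - ∑ v ∈ R, ∑ u ∈ Rᶜ, (if G.Adj v u then (1:ℤ) else 0) := by
        rw [Finset.mul_sum, ← Finset.sum_sub_distrib]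
        refine Finset.sum_congr rfl fun v _ => ?_
        rw [Finset.mul_sum, ← Finset.sum_sub_distrib]
        exact Finset.sum_congr rfl fun u _ => hpt v u
      have hb := hbal_int R
      have hle := le_abs_self (∑ v ∈ R, σ v)
      rw [Finset.sum_const_zero, hlo2sum, hA]
      linarith)
  obtain ⟨f, hffeas, hfex⟩ := hphase2
  refine ⟨f, hffeas.1, ?_, ?_, ?_⟩
  · intro v u hadj
    have hb := hffeas.2.1 v u
    have hl : lo2 v u = 0 := by rw [hlo2]; dsimp only; rw [if_neg hadj]
    have hl' : lo2 u v = 0 := by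
      rw [hlo2]; dsimp only; rw [if_neg (fun hh => hadj hh.symm)]
    rw [hl, hl'] at hb
    omega
  · intro v
    have := hfex v
    simpa [ex] using this
  · intro v u hadj
    have hb := hffeas.2.1 v u
    have h3 : ((4:ℕ):ℤ) - 1 = 3 := by norm_num
    rw [h3]
    rcases hηval v u hadj with h1 | h1
    · have h2 : η u v = -1 := by rw [hηskew u v, h1]
      have hl : lo2 v u = 1 := by rw [hlo2]; dsimp only; rw [if_pos hadj, if_pos h1]
      have hl' : lo2 u v = -3 := by
        rw [hlo2]; dsimp only; rw [if_pos hadj.symm, if_neg (by rw [h2]; norm_num)]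
      rw [hl, hl'] at hb
      have habs : |f v u| = f v u := abs_of_pos (by linarith [hb.1])
      rw [habs]
      constructor <;> linarith [hb.1, hb.2]
    · have h2 : η u v = 1 := by rw [hηskew u v, h1]; norm_num
      have hl : lo2 v u = -3 := by
        rw [hlo2]; dsimp only; rw [if_pos hadj, if_neg (by rw [h1]; norm_num)]
      have hl' : lo2 u v = 1 := by rw [hlo2]; dsimp only; rw [if_pos hadj.symm, if_pos h2]
      rw [hl, hl'] at hb
      have habs : |f v u| = -(f v u) := abs_of_neg (by linarith [hb.2])
      rw [habs]
      constructor <;> linarith [hb.1, hb.2]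

end NZAux

/- STATEMENT 2: a cubic graph `G` has a nowhere-zero 4-flow iff `G` admits a balanced
valuation with values in `{−2, +2}`. -/
theorem statement2 (G : SimpleGraph V)
    (hcubic : ∀ v, (G.neighborSet v).ncard = 3) :
    (∃ f, G.IsNZFlow 4 f) ↔
      ∃ w : V → ℝ, G.IsBalancedValuation w ∧ ∀ v, w v = 2 ∨ w v = -2 := by
  constructor
  · rintro ⟨f, hf⟩
    exact NZAux.forward G hcubic f hf
  · rintro ⟨w, hbal, hval⟩
    exact NZAux.backward G hcubic w hbal hval
end

section
/- A cubic graph G has a nowhere-zero 5-flow if and only if G admits a balanced valuation with values in {−5/3, +5/3}. -/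
variable {V : Type*} [Fintype V] [DecidableEq V]

open Finset
open scoped Classical

set_option linter.unusedSectionVars false
set_option maxHeartbeats 1000000

/-- getLast to getLastD -/
lemma NZ5.getLast_eq_getLastD : ∀ (l : List V) (a : V) (h : a :: l ≠ []),
    List.getLast (a :: l) h = l.getLastD a := by
  intro l
  induction l with
  | nil => intro a h; simp
  | cons b t ih =>
    intro a h
    rw [List.getLast_cons (by simp), ih b (by simp), List.getLastD_cons]

lemma NZ5.getLastD_mem : ∀ (l : List V) (a : V), l ≠ [] → l.getLastD a ∈ l := by
  intro l
  induction l with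
  | nil => simp
  | cons b t ih =>
    intro a _
    rw [List.getLastD_cons]
    rcases eq_or_ne t [] with rfl | h
    · simp
    · exact List.mem_cons_of_mem _ (ih b h)

lemma NZ5.getLastD_append : ∀ (p : List V) (c x : V) (q : List V),
    (p ++ c :: q).getLastD x = q.getLastD c := by
  intro p
  induction p with
  | nil => intro c x q; rw [List.nil_append, List.getLastD_cons]
  | cons d p' ih => intro c x q; rw [List.cons_append, List.getLastD_cons, ih]

/-- dedup a chain keeping endpoints -/
lemma NZ5.chain_dedup (r : V → V → Prop) : ∀ (l : List V) (a : V), List.Chain r a l →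
    ∃ l', List.Chain r a l' ∧ (a :: l').Nodup ∧ l'.getLastD a = l.getLastD a := by
  intro l
  induction l with
  | nil => intro a _; exact ⟨[], List.Chain.nil, by simp, rfl⟩
  | cons b t ih =>
    intro a hch
    rw [List.Chain, List.chain_cons] at hch
    obtain ⟨hab, hbt⟩ := hch
    obtain ⟨t', ht'ch, ht'nd, ht'last⟩ := ih b hbt
    by_cases ha : a ∈ b :: t'
    · obtain ⟨p, q, hpq⟩ := List.append_of_mem ha
      have hchainq : List.Chain r a q := by
        rcases p with _ | ⟨c, p'⟩
        · simp at hpq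
          obtain ⟨rfl, rfl⟩ := hpq
          exact ht'ch
        · rw [List.cons_append, List.cons.injEq] at hpq
          obtain ⟨rfl, ht'eq⟩ := hpq
          rw [ht'eq, List.Chain, ← List.cons_append, List.isChain_split] at ht'ch
          exact ht'ch.2
      have hndq : (a :: q).Nodup := by
        have : (a :: q).Sublist (b :: t') := by
          rw [hpq]; exact List.sublist_append_right p (a :: q)
        exact this.nodup ht'nd
      refine ⟨q, hchainq, hndq, ?_⟩
      have h1 : (b :: t').getLastD a = q.getLastD a := by
        rw [hpq, NZ5.getLastD_append]
      rw [List.getLastD_cons] at h1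
      rw [← h1, ht'last, List.getLastD_cons]
    · exact ⟨b :: t', List.Chain.cons hab ht'ch, by simp [ha, ht'nd],
        by rw [List.getLastD_cons, List.getLastD_cons, ht'last]⟩

/-- chains transfer along relations agreeing away from a forbidden vertex -/
lemma NZ5.chain_congr (r r' : V → V → Prop) (s₀ : V)
    (hagree : ∀ x y, r x y → x ≠ s₀ → y ≠ s₀ → r' x y) :
    ∀ (l : List V) (a : V), List.Chain r a l → a ≠ s₀ → (∀ x ∈ l, x ≠ s₀) →
      List.Chain r' a l := by
  intro l
  induction l with
  | nil => intro a _ _ _; exact List.Chain.nil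
  | cons b t ih =>
    intro a hch ha hl
    rw [List.Chain, List.chain_cons] at hch ⊢
    refine ⟨hagree _ _ hch.1 ha (hl b (by simp)), ih b hch.2 (hl b (by simp))
      (fun x hx => hl x (List.mem_cons_of_mem _ hx))⟩

/-- skew double sums vanish -/
lemma NZ5.skew_sum_zero (f : V → V → ℤ) (hsk : ∀ v w, f v w = - f w v) (X : Finset V) :
    ∑ v ∈ X, ∑ w ∈ X, f v w = 0 := by
  have h1 : ∑ v ∈ X, ∑ w ∈ X, f v w = ∑ v ∈ X, ∑ w ∈ X, - f w v := by
    apply Finset.sum_congr rfl; intro v _; apply Finset.sum_congr rfl; intro w _; exact hsk v w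
  have h2 : ∑ v ∈ X, ∑ w ∈ X, - f w v = - ∑ v ∈ X, ∑ w ∈ X, f v w := by
    rw [Finset.sum_comm (f := fun v w => - f w v)]
    simp [Finset.sum_neg_distrib]
  rw [h2] at h1
  linarith



namespace NZ5

/-- validity for Hoffman-style circulation search -/
def HValid (G : SimpleGraph V) (u f : V → V → ℤ) : Prop :=
  (∀ v w, f v w = - f w v) ∧ (∀ v w, ¬ G.Adj v w → f v w = 0) ∧
  (∀ v w, G.Adj v w → f v w ≤ u v w)

def HCong (G : SimpleGraph V) (s : ℤ) (u f : V → V → ℤ) : Prop :=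
  ∀ v w, G.Adj v w → s ∣ (u v w - f v w)

def HDiv (s : ℤ) (b : V → ℤ) (f : V → V → ℤ) : Prop :=
  ∀ v, s ∣ ((∑ w, f v w) - b v)

def HPhi (b : V → ℤ) (f : V → V → ℤ) : ℕ := ∑ v, ((∑ w, f v w) - b v).natAbs

def push (f : V → V → ℤ) (s : ℤ) (x y : V) : V → V → ℤ :=
  fun a c => f a c + (if a = x ∧ c = y then s else 0) - (if a = y ∧ c = x then s else 0)

lemma iteand (s : ℤ) (p q : Prop) [Decidable p] [Decidable q] :
    (if p ∧ q then s else 0) = (if q ∧ p then s else 0) := by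
  by_cases hp : p <;> by_cases hq : q <;> simp [hp, hq]

lemma push_apply_of_ne (f : V → V → ℤ) (s : ℤ) (x y a c : V)
    (h1 : ¬(a = x ∧ c = y)) (h2 : ¬(a = y ∧ c = x)) : push f s x y a c = f a c := by
  simp [push, h1, h2]

lemma push_skew (f : V → V → ℤ) (s : ℤ) {x y : V} (hsk : ∀ v w, f v w = - f w v) :
    ∀ a c, push f s x y a c = - push f s x y c a := by
  intro a c
  simp only [push]
  have h := hsk a c
  have e1 : (if c = x ∧ a = y then s else 0) = (if a = y ∧ c = x then s else 0) :=
    iteand s (c = x) (a = y)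
  have e2 : (if c = y ∧ a = x then s else 0) = (if a = x ∧ c = y then s else 0) :=
    iteand s (c = y) (a = x)
  rw [e1, e2, h]; ring

lemma push_rowsum (f : V → V → ℤ) (s : ℤ) (x y a : V) :
    ∑ c, push f s x y a c = (∑ c, f a c) + (if a = x then s else 0)
      - (if a = y then s else 0) := by
  simp only [push]
  rw [Finset.sum_sub_distrib, Finset.sum_add_distrib]
  congr 1
  · congr 1
    by_cases hax : a = x
    · simp [hax]
    · simp [hax]
  · by_cases hay : a = y
    · simp [hay]
    · simp [hay]

lemma haug (G : SimpleGraph V) (u : V → V → ℤ) (b : V → ℤ) (s : ℤ) (hs : 0 < s) :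
    ∀ (l : List V) (f : V → V → ℤ), HValid G u f → HCong G s u f → HDiv s b f →
    ∀ s₀ : V, List.Chain (fun v w => G.Adj v w ∧ f v w + s ≤ u v w) s₀ l →
    (s₀ :: l).Nodup → (∑ w, f s₀ w) < b s₀ →
    b (l.getLastD s₀) < ∑ w, f (l.getLastD s₀) w →
    ∃ f', HValid G u f' ∧ HCong G s u f' ∧ HDiv s b f' ∧ HPhi b f' < HPhi b f := by
  intro l
  induction l with
  | nil =>
    intro f _ _ _ s₀ _ _ hdef hexc
    simp only [List.getLastD_nil] at hexc
    omega
  | cons w l' ih =>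
    intro f hval hcong hdiv s₀ hch hnd hdef hexc
    rw [List.Chain, List.chain_cons] at hch
    obtain ⟨⟨hadj, hpush⟩, hch'⟩ := hch
    have hs₀w : s₀ ≠ w := by
      intro h
      exact (List.nodup_cons.1 hnd).1 (h ▸ List.mem_cons_self (a := w) (l := l'))
    obtain ⟨hsk, hz, hub⟩ := hval
    set f' := push f s s₀ w with hf'
    have pv1 : f' s₀ w = f s₀ w + s := by simp [hf', push, hs₀w]
    have pv2 : f' w s₀ = f w s₀ - s := by simp [hf', push, hs₀w, Ne.symm hs₀w]
    have pv3 : ∀ a c, ¬(a = s₀ ∧ c = w) → ¬(a = w ∧ c = s₀) → f' a c = f a c :=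
      fun a c h1 h2 => push_apply_of_ne f s s₀ w a c h1 h2
    have hval' : HValid G u f' := by
      refine ⟨push_skew f s hsk, ?_, ?_⟩
      · intro a c hnadj
        have h1 : ¬(a = s₀ ∧ c = w) := by
          rintro ⟨rfl, rfl⟩; exact hnadj hadj
        have h2 : ¬(a = w ∧ c = s₀) := by
          rintro ⟨rfl, rfl⟩; exact hnadj (G.adj_symm hadj)
        rw [pv3 a c h1 h2]; exact hz a c hnadj
      · intro a c hac
        by_cases h1 : a = s₀ ∧ c = w
        · rw [h1.1, h1.2, pv1]; exact hpush
        · by_cases h2 : a = w ∧ c = s₀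
          · rw [h2.1, h2.2, pv2]
            have hadj' : G.Adj w s₀ := G.adj_symm hadj
            have := hub w s₀ hadj'
            omega
          · rw [pv3 a c h1 h2]; exact hub a c hac
    have hcong' : HCong G s u f' := by
      intro a c hac
      by_cases h1 : a = s₀ ∧ c = w
      · rw [h1.1, h1.2, pv1]
        have := hcong s₀ w (h1.1 ▸ h1.2 ▸ hac)
        have h3 : u s₀ w - (f s₀ w + s) = (u s₀ w - f s₀ w) - s := by ring
        rw [h3]; exact dvd_sub this (dvd_refl s)
      · by_cases h2 : a = w ∧ c = s₀
        · rw [h2.1, h2.2, pv2]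
          have := hcong w s₀ (h2.1 ▸ h2.2 ▸ hac)
          have h3 : u w s₀ - (f w s₀ - s) = (u w s₀ - f w s₀) + s := by ring
          rw [h3]; exact dvd_add this (dvd_refl s)
        · rw [pv3 a c h1 h2]; exact hcong a c hac
    have hrow : ∀ a, ∑ c, f' a c = (∑ c, f a c) + (if a = s₀ then s else 0)
        - (if a = w then s else 0) := fun a => push_rowsum f s s₀ w a
    have hrs₀ : ∑ c, f' s₀ c = (∑ c, f s₀ c) + s := by rw [hrow]; simp [hs₀w]
    have hrw : ∑ c, f' w c = (∑ c, f w c) - s := by rw [hrow]; simp [Ne.symm hs₀w]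
    have hro : ∀ a, a ≠ s₀ → a ≠ w → ∑ c, f' a c = ∑ c, f a c := by
      intro a h1 h2; rw [hrow]; simp [h1, h2]
    have hdiv' : HDiv s b f' := by
      intro v
      by_cases h1 : v = s₀
      · subst h1
        rw [hrs₀]
        have h := hdiv v
        have h3 : (∑ c, f v c) + s - b v = ((∑ c, f v c) - b v) + s := by ring
        rw [h3]; exact dvd_add h (dvd_refl s)
      · by_cases h2 : v = w
        · subst h2
          rw [hrw]
          have h := hdiv v
          have h3 : (∑ c, f v c) - s - b v = ((∑ c, f v c) - b v) - s := by ring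
          rw [h3]; exact dvd_sub h (dvd_refl s)
        · rw [hro v h1 h2]; exact hdiv v
    -- Phi accounting
    have hphi : ∀ g : V → V → ℤ, ((HPhi b g : ℕ) : ℤ) = ∑ v, |(∑ c, g v c) - b v| := by
      intro g; simp [HPhi, Int.natCast_natAbs]
    have hdSle : (∑ c, f s₀ c) - b s₀ ≤ -s := by
      have h := hdiv s₀
      have h2 : 0 < b s₀ - (∑ c, f s₀ c) := by omega
      have h3 : s ∣ b s₀ - (∑ c, f s₀ c) := by
        rw [← neg_sub]; exact dvd_neg.2 h
      have := Int.le_of_dvd h2 h3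
      omega
    have hsum : ((HPhi b f' : ℕ) : ℤ) - ((HPhi b f : ℕ) : ℤ) =
        (|(∑ c, f s₀ c) - b s₀ + s| - |(∑ c, f s₀ c) - b s₀|)
        + (|(∑ c, f w c) - b w - s| - |(∑ c, f w c) - b w|) := by
      rw [hphi, hphi, ← Finset.sum_sub_distrib]
      have key : ∀ v : V, |(∑ c, f' v c) - b v| - |(∑ c, f v c) - b v| =
          (if v = s₀ then |(∑ c, f s₀ c) - b s₀ + s| - |(∑ c, f s₀ c) - b s₀| else 0)
          + (if v = w then |(∑ c, f w c) - b w - s| - |(∑ c, f w c) - b w| else 0) := by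
        intro v
        by_cases h1 : v = s₀
        · subst h1
          rw [hrs₀]
          simp [hs₀w]
          ring_nf
        · by_cases h2 : v = w
          · subst h2
            rw [hrw]
            simp [h1]
            ring_nf
          · rw [hro v h1 h2]; simp [h1, h2]
      rw [Finset.sum_congr rfl (fun v _ => key v), Finset.sum_add_distrib]
      rw [Finset.sum_ite_eq' Finset.univ s₀, Finset.sum_ite_eq' Finset.univ w]
      simp
    by_cases hw : b w < ∑ c, f w c
    · -- immediate decrease
      refine ⟨f', hval', hcong', hdiv', ?_⟩
      have hdWge : s ≤ (∑ c, f w c) - b w := by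
        have h := hdiv w
        exact Int.le_of_dvd (by omega) h
      have e1 : |(∑ c, f s₀ c) - b s₀ + s| - |(∑ c, f s₀ c) - b s₀| = -s := by
        rw [abs_of_nonpos (by omega), abs_of_nonpos (by omega)]; ring
      have e2 : |(∑ c, f w c) - b w - s| - |(∑ c, f w c) - b w| = -s := by
        rw [abs_of_nonneg (by omega), abs_of_nonneg (by omega)]; ring
      have : ((HPhi b f' : ℕ) : ℤ) < ((HPhi b f : ℕ) : ℤ) := by
        rw [e1, e2] at hsum; omega
      exact_mod_cast this
    · have hdW : ∑ c, f w c ≤ b w := not_lt.1 hw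
      rcases eq_or_ne l' [] with rfl | hl'
      · rw [List.getLastD_cons, List.getLastD_nil] at hexc
        omega
      · have hxmem : l'.getLastD w ∈ l' := NZ5.getLastD_mem l' w hl'
        have hnds₀ : s₀ ∉ w :: l' := (List.nodup_cons.1 hnd).1
        have hxs₀ : l'.getLastD w ≠ s₀ := by
          intro h
          exact hnds₀ (h ▸ List.mem_cons_of_mem _ hxmem)
        have hnd' : (w :: l').Nodup := (List.nodup_cons.1 hnd).2
        have hxw : l'.getLastD w ≠ w := by
          intro h
          exact (List.nodup_cons.1 hnd').1 (h ▸ hxmem)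
        have hch'' : List.Chain (fun v c => G.Adj v c ∧ f' v c + s ≤ u v c) w l' := by
          refine NZ5.chain_congr _ _ s₀ ?_ l' w hch' (Ne.symm hs₀w)
            (fun x hx h => hnds₀ (h ▸ List.mem_cons_of_mem _ hx))
          intro x y hxy hx hy
          refine ⟨hxy.1, ?_⟩
          rw [pv3 x y (fun h => hx h.1) (fun h => hy h.2)]
          exact hxy.2
        have hdef' : ∑ c, f' w c < b w := by rw [hrw]; omega
        have hexc' : b (l'.getLastD w) < ∑ c, f' (l'.getLastD w) c := by
          rw [hro _ hxs₀ hxw]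
          rw [List.getLastD_cons] at hexc
          exact hexc
        obtain ⟨f'', h1, h2, h3, h4⟩ := ih f' hval' hcong' hdiv' w hch'' hnd' hdef' hexc'
        refine ⟨f'', h1, h2, h3, lt_of_lt_of_le h4 ?_⟩
        have e1 : |(∑ c, f s₀ c) - b s₀ + s| - |(∑ c, f s₀ c) - b s₀| = -s := by
          rw [abs_of_nonpos (by omega), abs_of_nonpos (by omega)]; ring
        have e2 : |(∑ c, f w c) - b w - s| - |(∑ c, f w c) - b w| = s := by
          rw [abs_of_nonpos (by omega), abs_of_nonpos (by omega)]; ring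
        have : ((HPhi b f' : ℕ) : ℤ) ≤ ((HPhi b f : ℕ) : ℤ) := by
          rw [e1, e2] at hsum; omega
        exact_mod_cast this

lemma hoffman (G : SimpleGraph V) (u : V → V → ℤ) (b : V → ℤ) (s : ℤ) (hs : 0 < s)
    (hsumb : ∑ v, b v = 0)
    (hcut : ∀ X : Finset V, ∑ v ∈ X, b v ≤ (s - 1) +
      ∑ v ∈ X, ∑ w ∈ Xᶜ, if G.Adj v w then u v w else 0)
    (f0 : V → V → ℤ) (h0 : HValid G u f0) (hc0 : HCong G s u f0) (hd0 : HDiv s b f0) :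
    ∃ f, HValid G u f ∧ HCong G s u f ∧ (∀ v, ∑ w, f v w = b v) := by
  classical
  suffices key : ∀ n (f : V → V → ℤ), HValid G u f → HCong G s u f → HDiv s b f →
      HPhi b f = n → ∃ f, HValid G u f ∧ HCong G s u f ∧ (∀ v, ∑ w, f v w = b v) from
    key (HPhi b f0) f0 h0 hc0 hd0 rfl
  intro n
  induction n using Nat.strong_induction_on with
  | _ n ih =>
  intro f hval hcong hdiv hn
  by_cases h0' : HPhi b f = 0
  · refine ⟨f, hval, hcong, ?_⟩
    intro v
    have h := Finset.sum_eq_zero_iff.1 h0' v (Finset.mem_univ v)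
    omega
  · have hskew := hval.1
    have htot : ∑ v, ((∑ w, f v w) - b v) = 0 := by
      rw [Finset.sum_sub_distrib, hsumb]
      have h := NZ5.skew_sum_zero f hskew Finset.univ
      rw [h]; ring
    have hex : ∃ v, (∑ w, f v w) < b v := by
      by_contra hcon
      push_neg at hcon
      have hnz : ∃ v, (∑ w, f v w) - b v ≠ 0 := by
        by_contra hall; push_neg at hall
        apply h0'; unfold HPhi; apply Finset.sum_eq_zero; intro v _; simp [hall v]
      obtain ⟨v₀, hv₀⟩ := hnz
      have hnn : ∀ v ∈ Finset.univ, 0 ≤ (∑ w, f v w) - b v := fun v _ => by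
        have := hcon v; omega
      exact hv₀ ((Finset.sum_eq_zero_iff_of_nonneg hnn).1 htot v₀ (mem_univ v₀))
    obtain ⟨s₀, hs₀⟩ := hex
    set r : V → V → Prop := fun v w => G.Adj v w ∧ f v w + s ≤ u v w with hr
    set X : Finset V := univ.filter (fun x => Relation.ReflTransGen r s₀ x) with hX
    by_cases hA : ∃ x ∈ X, b x < ∑ w, f x w
    · obtain ⟨x, hxX, hxb⟩ := hA
      have hreach : Relation.ReflTransGen r s₀ x := (Finset.mem_filter.1 hxX).2
      obtain ⟨l, hlch, hllast⟩ := List.exists_isChain_cons_of_relationReflTransGen hreach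
      have hllast' : l.getLastD s₀ = x := by
        rw [← NZ5.getLast_eq_getLastD]; exact hllast
      obtain ⟨l', hch', hnd', hlast'⟩ := NZ5.chain_dedup r l s₀ hlch
      have h4 : b (l'.getLastD s₀) < ∑ w, f (l'.getLastD s₀) w := by
        rw [hlast', hllast']; exact hxb
      obtain ⟨f', h1, h2, h3, h4'⟩ := NZ5.haug G u b s hs l' f hval hcong hdiv s₀
        hch' hnd' hs₀ h4
      exact ih (HPhi b f') (by omega) f' h1 h2 h3 rfl
    · exfalso
      push_neg at hA
      have hs₀X : s₀ ∈ X := Finset.mem_filter.2 ⟨Finset.mem_univ _, Relation.ReflTransGen.refl⟩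
      have hsat : ∀ v ∈ X, ∀ w, w ∉ X → G.Adj v w → f v w = u v w := by
        intro v hv w hw hadj
        have hnr : ¬ (f v w + s ≤ u v w) := by
          intro hcanpush
          exact hw (Finset.mem_filter.2 ⟨Finset.mem_univ _,
            ((Finset.mem_filter.1 hv).2).tail ⟨hadj, hcanpush⟩⟩)
        have hle := hval.2.2 v w hadj
        have hdvd := hcong v w hadj
        rcases eq_or_ne (u v w - f v w) 0 with h | h
        · omega
        · have := Int.le_of_dvd (by omega) hdvd
          omega
      have hA' : ∑ v ∈ X, (∑ w, f v w) = ∑ v ∈ X, ∑ w ∈ Xᶜ, (if G.Adj v w then u v w else 0) := by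
        have e1 : ∀ v ∈ X, (∑ w, f v w) = (∑ w ∈ X, f v w) + ∑ w ∈ Xᶜ, f v w := fun v _ =>
          (Finset.sum_add_sum_compl X _).symm
        rw [Finset.sum_congr rfl e1, Finset.sum_add_distrib, NZ5.skew_sum_zero f hskew X,
          zero_add]
        apply Finset.sum_congr rfl; intro v hv
        apply Finset.sum_congr rfl; intro w hw
        by_cases hadj : G.Adj v w
        · rw [if_pos hadj, hsat v hv w (by simpa using hw) hadj]
        · rw [if_neg hadj, hval.2.1 v w hadj]
      have hup : ∑ v ∈ X, (∑ w, f v w) ≤ (∑ v ∈ X, b v) - s := by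
        rw [Finset.sum_eq_sum_sdiff_singleton_add hs₀X (fun v => ∑ w, f v w),
            Finset.sum_eq_sum_sdiff_singleton_add hs₀X b]
        have hterm : (∑ w, f s₀ w) ≤ b s₀ - s := by
          have hdvd := hdiv s₀
          have h3 : s ∣ b s₀ - (∑ w, f s₀ w) := by rw [← neg_sub]; exact dvd_neg.2 hdvd
          have := Int.le_of_dvd (by omega) h3
          omega
        have hrest : ∑ v ∈ X \ {s₀}, (∑ w, f v w) ≤ ∑ v ∈ X \ {s₀}, b v :=
          Finset.sum_le_sum (fun v hv => hA v (Finset.mem_sdiff.1 hv).1)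
        omega
      have := hcut X
      omega

lemma cutCard_eq_card (G : SimpleGraph V) (X : Finset V) :
    G.cutCard X = ((X ×ˢ Xᶜ).filter (fun p : V × V => G.Adj p.1 p.2)).card := by
  classical
  set C := (X ×ˢ Xᶜ).filter (fun p : V × V => G.Adj p.1 p.2) with hC
  have himg : {e ∈ G.edgeSet | ∃ x y : V, e = s(x, y) ∧ x ∈ X ∧ y ∉ X} =
      ↑(C.image (fun p => s(p.1, p.2))) := by
    ext e
    simp only [Set.mem_setOf_eq, Finset.coe_image, Set.mem_image, Finset.mem_coe, hC,
      Finset.mem_filter, Finset.mem_product, Finset.mem_compl]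
    constructor
    · rintro ⟨he, x, y, rfl, hx, hy⟩
      exact ⟨(x, y), ⟨⟨hx, hy⟩, by simpa using he⟩, rfl⟩
    · rintro ⟨⟨x, y⟩, ⟨⟨hx, hy⟩, hadj⟩, rfl⟩
      exact ⟨by simpa using hadj, x, y, rfl, hx, hy⟩
  have hinj : Set.InjOn (fun p : V × V => s(p.1, p.2)) ↑C := by
    rintro ⟨a, b⟩ ha ⟨c, d⟩ hc h
    simp only [Finset.mem_coe, hC, Finset.mem_filter, Finset.mem_product,
      Finset.mem_compl] at ha hc
    simp only [Sym2.eq_iff] at h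
    rcases h with ⟨rfl, rfl⟩ | ⟨rfl, rfl⟩
    · rfl
    · exact absurd ha.1.1 hc.1.2
  rw [SimpleGraph.cutCard, himg, Set.ncard_coe_finset, Finset.card_image_of_injOn hinj]

lemma cutCard_sum (G : SimpleGraph V) (X : Finset V) :
    (G.cutCard X : ℤ) = ∑ v ∈ X, ∑ w ∈ Xᶜ, (if G.Adj v w then (1 : ℤ) else 0) := by
  rw [NZ5.cutCard_eq_card, ← Finset.sum_product']
  exact (Finset.sum_boole _ _).symm

lemma cross_sum (g : V → V → ℤ) (hsk : ∀ v w, g v w = - g w v) (X : Finset V) :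
    ∑ v ∈ X, ∑ w ∈ Xᶜ, g v w = ∑ v ∈ X, (∑ w, g v w) := by
  have e1 : ∀ v ∈ X, (∑ w, g v w) = (∑ w ∈ X, g v w) + ∑ w ∈ Xᶜ, g v w := fun v _ =>
    (Finset.sum_add_sum_compl X _).symm
  rw [Finset.sum_congr rfl e1, Finset.sum_add_distrib, NZ5.skew_sum_zero g hsk X, zero_add]

lemma sum_to_cross (G : SimpleGraph V) (h : V → V → ℤ)
    (hz : ∀ v w, ¬G.Adj v w → h v w = 0) (X : Finset V) :
    ∑ p ∈ (X ×ˢ Xᶜ).filter (fun p : V × V => G.Adj p.1 p.2), h p.1 p.2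
      = ∑ v ∈ X, ∑ w ∈ Xᶜ, h v w := by
  rw [← Finset.sum_product']
  exact Finset.sum_filter_of_ne (fun p _ hne => by
    by_contra hadj; exact hne (hz p.1 p.2 hadj))

lemma sign_cases (x : ℤ) (hx : x ≠ 0) :
    (Int.sign x = 1 ∧ 0 < x) ∨ (Int.sign x = -1 ∧ x < 0) := by
  rcases lt_trichotomy x 0 with h | h | h
  · exact Or.inr ⟨Int.sign_eq_neg_one_iff_neg.2 h, h⟩
  · exact absurd h hx
  · exact Or.inl ⟨Int.sign_eq_one_iff_pos.2 h, h⟩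

lemma cross_ineq (G : SimpleGraph V) (F : V → V → ℤ)
    (hb : ∀ v w, G.Adj v w → 1 ≤ |F v w| ∧ |F v w| ≤ 4) (X : Finset V)
    (hzero : ∑ p ∈ (X ×ˢ Xᶜ).filter (fun p : V × V => G.Adj p.1 p.2), F p.1 p.2 = 0) :
    5 * |∑ p ∈ (X ×ˢ Xᶜ).filter (fun p : V × V => G.Adj p.1 p.2), Int.sign (F p.1 p.2)|
      ≤ 3 * (((X ×ˢ Xᶜ).filter (fun p : V × V => G.Adj p.1 p.2)).card : ℤ) := by
  classical
  set C := (X ×ˢ Xᶜ).filter (fun p : V × V => G.Adj p.1 p.2) with hC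
  have hCadj : ∀ p ∈ C, G.Adj p.1 p.2 := fun p hp => (Finset.mem_filter.1 hp).2
  set P := C.filter (fun p : V × V => 0 < F p.1 p.2) with hP
  set Nn := C.filter (fun p : V × V => ¬ 0 < F p.1 p.2) with hNn
  have hNneg : ∀ p ∈ Nn, F p.1 p.2 < 0 := by
    intro p hp
    rw [hNn, Finset.mem_filter] at hp
    have h1 := (hb p.1 p.2 (hCadj p hp.1)).1
    have h2 : F p.1 p.2 ≠ 0 := by
      intro h0; rw [h0] at h1; simp at h1
    have h3 := hp.2
    omega
  have hcards : P.card + Nn.card = C.card :=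
    Finset.card_filter_add_card_filter_not _
  have hsplitF : (∑ p ∈ P, F p.1 p.2) + ∑ p ∈ Nn, F p.1 p.2 = 0 := by
    rw [hP, hNn, Finset.sum_filter_add_sum_filter_not]; exact hzero
  have hsplitS : (∑ p ∈ P, Int.sign (F p.1 p.2)) + ∑ p ∈ Nn, Int.sign (F p.1 p.2)
      = ∑ p ∈ C, Int.sign (F p.1 p.2) := by
    rw [hP, hNn, Finset.sum_filter_add_sum_filter_not]
  have hsP : ∑ p ∈ P, Int.sign (F p.1 p.2) = (P.card : ℤ) := by
    rw [Finset.sum_congr rfl (fun p hp => Int.sign_eq_one_iff_pos.2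
      ((Finset.mem_filter.1 hp).2))]
    simp [hP]
  have hsN : ∑ p ∈ Nn, Int.sign (F p.1 p.2) = -(Nn.card : ℤ) := by
    rw [Finset.sum_congr rfl (fun p hp => Int.sign_eq_neg_one_iff_neg.2 (hNneg p hp))]
    simp
  have hPlo : (P.card : ℤ) ≤ ∑ p ∈ P, F p.1 p.2 := by
    have := Finset.card_nsmul_le_sum P (fun p => F p.1 p.2) 1
      (fun p hp => by have h2 := (Finset.mem_filter.1 hp).2; show (1:ℤ) ≤ F p.1 p.2; omega)
    simpa using this
  have hPhi4 : ∑ p ∈ P, F p.1 p.2 ≤ 4 * (P.card : ℤ) := by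
    have := Finset.sum_le_card_nsmul P (fun p => F p.1 p.2) 4
      (fun p hp => by
        have h1 := (hb p.1 p.2 (hCadj p (Finset.mem_filter.1 hp).1)).2
        have h2 := (Finset.mem_filter.1 hp).2
        rw [abs_of_pos h2] at h1; show F p.1 p.2 ≤ 4; exact h1)
    simpa [mul_comm] using this
  have hNlo : -(4 * (Nn.card : ℤ)) ≤ ∑ p ∈ Nn, F p.1 p.2 := by
    have := Finset.card_nsmul_le_sum Nn (fun p => F p.1 p.2) (-4)
      (fun p hp => by
        have h1 := (hb p.1 p.2 (hCadj p (Finset.mem_filter.1 hp).1)).2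
        have h2 := hNneg p hp
        rw [abs_of_neg h2] at h1; show (-4:ℤ) ≤ F p.1 p.2; omega)
    simp only [nsmul_eq_mul] at this
    omega
  have hNhi : ∑ p ∈ Nn, F p.1 p.2 ≤ -(Nn.card : ℤ) := by
    have := Finset.sum_le_card_nsmul Nn (fun p => F p.1 p.2) (-1)
      (fun p hp => by have h2 := hNneg p hp; show F p.1 p.2 ≤ -1; omega)
    simp only [nsmul_eq_mul] at this
    omega
  rw [← hsplitS, hsP, hsN]
  have hc : (P.card : ℤ) + (Nn.card : ℤ) = (C.card : ℤ) := by exact_mod_cast hcards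
  rcases abs_cases ((P.card : ℤ) + -(Nn.card : ℤ)) with ⟨h, _⟩ | ⟨h, _⟩ <;> rw [h] <;>
    linarith [hPlo, hPhi4, hNlo, hNhi, hsplitF, hc]

lemma nbr_card (G : SimpleGraph V) (hcubic : ∀ v, (G.neighborSet v).ncard = 3) (v : V) :
    (Finset.univ.filter (fun w => G.Adj v w)).card = 3 := by
  have h1 := hcubic v
  have h2 : G.neighborSet v = ↑(Finset.univ.filter (fun w => G.Adj v w)) := by
    ext w; simp [SimpleGraph.neighborSet]
  rw [h2, Set.ncard_coe_finset] at h1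
  exact h1

lemma forward (G : SimpleGraph V) (hcubic : ∀ v, (G.neighborSet v).ncard = 3)
    (F : V → V → ℤ) (hNZ : G.IsNZFlow 5 F) :
    ∃ w : V → ℝ, G.IsBalancedValuation w ∧ ∀ v, w v = 5/3 ∨ w v = -(5/3) := by
  classical
  obtain ⟨hsk, hz, hdiv, hb⟩ := hNZ
  have hb4 : ∀ v w, G.Adj v w → 1 ≤ |F v w| ∧ |F v w| ≤ 4 := by
    intro v w h
    have h1 := hb v w h
    constructor
    · exact h1.1
    · have := h1.2; push_cast at this; omega
  set ε : V → ℤ := fun v => ∑ w, Int.sign (F v w) with hε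
  have hsgnskew : ∀ v w, Int.sign (F v w) = - Int.sign (F w v) := by
    intro v w; rw [hsk v w, Int.sign_neg]
  have hεpm : ∀ v, ε v = 1 ∨ ε v = -1 := by
    intro v
    obtain ⟨a, b2, c, hab, hac, hbc, hset⟩ := Finset.card_eq_three.1 (NZ5.nbr_card G hcubic v)
    have hsub : ∀ (g : V → ℤ), (∀ w, ¬ G.Adj v w → g w = 0) →
        ∑ w, g w = g a + g b2 + g c := by
      intro g hg
      rw [← Finset.sum_subset (Finset.subset_univ (Finset.univ.filter (fun w => G.Adj v w)))
        (fun x _ hx => hg x (by simpa using hx))]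
      rw [hset, Finset.sum_insert (by simp [hab, hac]), Finset.sum_insert (by simp [hbc]),
        Finset.sum_singleton]
      ring
    have hmem : ∀ x, x ∈ ({a, b2, c} : Finset V) → G.Adj v x := by
      intro x hx
      have : x ∈ Finset.univ.filter (fun w => G.Adj v w) := by rw [hset]; exact hx
      simpa using this
    have hma : G.Adj v a := hmem a (by simp)
    have hmb : G.Adj v b2 := hmem b2 (by simp)
    have hmc : G.Adj v c := hmem c (by simp)
    have hFsum : F v a + F v b2 + F v c = 0 := by
      have h := hdiv v
      rw [hsub (fun w => F v w) (fun w hw => hz v w hw)] at h; exact h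
    have hεv : ε v = Int.sign (F v a) + Int.sign (F v b2) + Int.sign (F v c) := by
      rw [hε]
      exact hsub (fun w => Int.sign (F v w)) (fun w hw => by
        show (F v w).sign = 0; rw [hz v w hw]; rfl)
    have hne : ∀ x, G.Adj v x → F v x ≠ 0 := by
      intro x hx h0
      have := (hb4 v x hx).1
      rw [h0] at this; simp at this
    rcases NZ5.sign_cases (F v a) (hne a hma) with ⟨h1a, h2a⟩ | ⟨h1a, h2a⟩ <;>
      rcases NZ5.sign_cases (F v b2) (hne b2 hmb) with ⟨h1b, h2b⟩ | ⟨h1b, h2b⟩ <;>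
      rcases NZ5.sign_cases (F v c) (hne c hmc) with ⟨h1c, h2c⟩ | ⟨h1c, h2c⟩ <;>
      rw [hεv, h1a, h1b, h1c] <;> omega
  refine ⟨fun v => (5/3 : ℝ) * (ε v : ℝ), ?_, ?_⟩
  · intro X
    dsimp only
    have hcross0 : ∑ p ∈ (X ×ˢ Xᶜ).filter (fun p : V × V => G.Adj p.1 p.2), F p.1 p.2 = 0 := by
      rw [NZ5.sum_to_cross G F hz X, NZ5.cross_sum F hsk X]
      exact Finset.sum_eq_zero (fun v _ => hdiv v)
    have hsgn : ∑ p ∈ (X ×ˢ Xᶜ).filter (fun p : V × V => G.Adj p.1 p.2), Int.sign (F p.1 p.2)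
        = ∑ v ∈ X, ε v := by
      rw [NZ5.sum_to_cross G (fun v w => Int.sign (F v w))
        (fun v w h => by show (F v w).sign = 0; rw [hz v w h]; rfl) X,
        NZ5.cross_sum (fun v w => Int.sign (F v w)) hsgnskew X]
    have hint : 5 * |∑ v ∈ X, ε v| ≤ 3 * (G.cutCard X : ℤ) := by
      rw [← hsgn, NZ5.cutCard_eq_card]
      exact NZ5.cross_ineq G F hb4 X hcross0
    have hsum : ∑ v ∈ X, (5/3 : ℝ) * (ε v : ℝ) = (5/3 : ℝ) * ((∑ v ∈ X, ε v : ℤ) : ℝ) := by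
      rw [← Finset.mul_sum]; push_cast; ring
    rw [hsum, abs_mul, abs_of_pos (by norm_num : (0:ℝ) < 5/3), ← Int.cast_abs]
    have h2 : (5 : ℝ) * ((|∑ v ∈ X, ε v| : ℤ) : ℝ) ≤ 3 * (G.cutCard X : ℝ) := by
      exact_mod_cast hint
    linarith
  · intro v
    dsimp only
    rcases hεpm v with h | h <;> rw [h] <;> norm_num

lemma reverse (G : SimpleGraph V) (hcubic : ∀ v, (G.neighborSet v).ncard = 3)
    (w : V → ℝ) (hbal : G.IsBalancedValuation w)
    (hw : ∀ v, w v = 5/3 ∨ w v = -(5/3)) : ∃ F, G.IsNZFlow 5 F := by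
  classical
  set ε : V → ℤ := fun v => if w v = 5/3 then 1 else -1 with hε
  have hεpm : ∀ v, ε v = 1 ∨ ε v = -1 := fun v => by
    rw [hε]; dsimp; by_cases h : w v = 5/3 <;> simp [h]
  have hwe : ∀ v, w v = (5/3 : ℝ) * (ε v : ℝ) := by
    intro v; rw [hε]; dsimp; by_cases h : w v = 5/3
    · simp [h]
    · rcases hw v with h' | h'
      · exact absurd h' h
      · rw [if_neg h, h']; norm_num
  have hZ : ∀ X : Finset V, 5 * |∑ v ∈ X, ε v| ≤ 3 * (G.cutCard X : ℤ) := by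
    intro X
    have h1 := hbal X
    have h2 : ∑ v ∈ X, w v = (5/3 : ℝ) * ((∑ v ∈ X, ε v : ℤ) : ℝ) := by
      rw [Finset.sum_congr rfl (fun v _ => hwe v), ← Finset.mul_sum]; push_cast; ring
    rw [h2, abs_mul, abs_of_pos (by norm_num : (0:ℝ) < 5/3), ← Int.cast_abs] at h1
    have h3 : (5:ℝ) * ((|∑ v ∈ X, ε v| : ℤ) : ℝ) ≤ 3 * (G.cutCard X : ℝ) := by linarith
    exact_mod_cast h3
  -- stage 1 : orientation with prescribed imbalance
  set e := Fintype.equivFin V with he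
  set f0 : V → V → ℤ := fun v w' => if G.Adj v w' then (if e v < e w' then 1 else -1) else 0
    with hf0
  have hf0sk : ∀ v w', f0 v w' = - f0 w' v := by
    intro v w'
    rw [hf0]; dsimp
    by_cases h : G.Adj v w'
    · rw [if_pos h, if_pos (G.adj_symm h)]
      have hne : e v ≠ e w' := fun hh => (G.ne_of_adj h) (e.injective hh)
      rcases lt_or_gt_of_ne hne with hlt | hgt
      · rw [if_pos hlt, if_neg (asymm hlt)]; norm_num
      · rw [if_neg (asymm hgt), if_pos hgt]
    · rw [if_neg h, if_neg (fun h' => h (G.adj_symm h'))]; norm_num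
  have h0 : NZ5.HValid G (fun _ _ => 1) f0 := by
    refine ⟨hf0sk, ?_, ?_⟩
    · intro v w' h; rw [hf0]; dsimp; rw [if_neg h]
    · intro v w' h; rw [hf0]; dsimp; rw [if_pos h]; split <;> omega
  have hc0 : NZ5.HCong G 2 (fun _ _ => 1) f0 := by
    intro v w' h; rw [hf0]; dsimp; rw [if_pos h]; split <;> omega
  have hd0 : NZ5.HDiv 2 ε f0 := by
    intro v
    have hsub : ∑ w', f0 v w' = ∑ w' ∈ Finset.univ.filter (fun x => G.Adj v x), f0 v w' :=
      (Finset.sum_subset (Finset.subset_univ _) (fun x _ hx => by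
        rw [hf0]; dsimp; rw [if_neg (by simpa using hx)])).symm
    have hdvd : 2 ∣ (∑ w' ∈ Finset.univ.filter (fun x => G.Adj v x), f0 v w')
        - ((Finset.univ.filter (fun x => G.Adj v x)).card : ℤ) := by
      have heq : (∑ w' ∈ Finset.univ.filter (fun x => G.Adj v x), f0 v w')
          - ((Finset.univ.filter (fun x => G.Adj v x)).card : ℤ)
          = ∑ w' ∈ Finset.univ.filter (fun x => G.Adj v x), (f0 v w' - 1) := by
        rw [Finset.sum_sub_distrib]; simp
      rw [heq]
      exact Finset.dvd_sum (fun x hx => by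
        rw [hf0]; dsimp; rw [if_pos (by simpa using hx)]; split <;> omega)
    have hcard := NZ5.nbr_card G hcubic v
    rw [hcard] at hdvd
    rcases hεpm v with h | h <;> rw [hsub, h] <;> omega
  have hsum0 : ∑ v, ε v = 0 := by
    have h := hZ Finset.univ
    have hcut0 : G.cutCard Finset.univ = 0 := by
      rw [NZ5.cutCard_eq_card]; simp
    rw [hcut0] at h
    have h2 := abs_nonneg (∑ v, ε v)
    have h3 : |∑ v, ε v| = 0 := by omega
    exact abs_eq_zero.1 h3
  have hcut1 : ∀ X : Finset V, ∑ v ∈ X, ε v ≤ (2 - 1) +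
      ∑ v ∈ X, ∑ w' ∈ Xᶜ, if G.Adj v w' then (1:ℤ) else 0 := by
    intro X
    have h1 := hZ X
    have h2 := NZ5.cutCard_sum G X
    have h4 : (0:ℤ) ≤ (G.cutCard X : ℤ) := Int.natCast_nonneg _
    have h5 : ∑ v ∈ X, ε v ≤ |∑ v ∈ X, ε v| := le_abs_self _
    rw [← h2]
    omega
  obtain ⟨d, hdval, hdcong, hddiv⟩ := NZ5.hoffman G (fun _ _ => 1) ε 2 (by norm_num)
    hsum0 hcut1 f0 h0 hc0 hd0
  have hdpm : ∀ v w', G.Adj v w' → d v w' = 1 ∨ d v w' = -1 := by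
    intro v w' h
    have h1 : d v w' ≤ 1 := hdval.2.2 v w' h
    have h2 : d w' v ≤ 1 := hdval.2.2 w' v (G.adj_symm h)
    have h3 := hdval.1 v w'
    have h4 : (2:ℤ) ∣ 1 - d v w' := hdcong v w' h
    omega
  -- stage 2 : circulation with values in [1,4] along the orientation
  set u2 : V → V → ℤ := fun v w' => if 0 < d v w' then 4 else -1 with hu2
  set g0 : V → V → ℤ := fun v w' => 4 * d v w' with hg0
  have hg0val : NZ5.HValid G u2 g0 := by
    refine ⟨fun v w' => by rw [hg0]; dsimp; rw [hdval.1 v w']; ring, ?_, ?_⟩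
    · intro v w' h; rw [hg0]; dsimp; rw [hdval.2.1 v w' h]; ring
    · intro v w' h
      rcases hdpm v w' h with h1 | h1 <;> rw [hg0, hu2] <;> dsimp <;> rw [h1] <;> norm_num
  have hcut2 : ∀ X : Finset V, ∑ v ∈ X, (fun _ : V => (0:ℤ)) v ≤ ((1:ℤ) - 1) +
      ∑ v ∈ X, ∑ w' ∈ Xᶜ, if G.Adj v w' then u2 v w' else 0 := by
    intro X
    have e1 : ∀ v w', (2:ℤ) * (if G.Adj v w' then u2 v w' else 0) =
        5 * d v w' + 3 * (if G.Adj v w' then (1:ℤ) else 0) := by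
      intro v w'
      by_cases h : G.Adj v w'
      · rcases hdpm v w' h with h1 | h1 <;> rw [if_pos h, if_pos h, hu2] <;> dsimp <;>
          rw [h1] <;> norm_num
      · rw [if_neg h, if_neg h, hdval.2.1 v w' h]; ring
    have key : 2 * (∑ v ∈ X, ∑ w' ∈ Xᶜ, if G.Adj v w' then u2 v w' else 0) =
        5 * (∑ v ∈ X, ε v) + 3 * (G.cutCard X : ℤ) := by
      rw [Finset.mul_sum]
      have e2 : ∀ v ∈ X, 2 * (∑ w' ∈ Xᶜ, if G.Adj v w' then u2 v w' else 0)
          = (∑ w' ∈ Xᶜ, 5 * d v w') + ∑ w' ∈ Xᶜ, 3 * (if G.Adj v w' then (1:ℤ) else 0) := by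
        intro v _
        rw [Finset.mul_sum, ← Finset.sum_add_distrib]
        exact Finset.sum_congr rfl (fun w' _ => e1 v w')
      rw [Finset.sum_congr rfl e2, Finset.sum_add_distrib]
      have e3 : ∑ v ∈ X, ∑ w' ∈ Xᶜ, (5:ℤ) * d v w' = 5 * ∑ v ∈ X, ε v := by
        have : ∀ v ∈ X, ∑ w' ∈ Xᶜ, (5:ℤ) * d v w' = 5 * ∑ w' ∈ Xᶜ, d v w' := fun v _ =>
          (Finset.mul_sum _ _ _).symm
        rw [Finset.sum_congr rfl this, ← Finset.mul_sum, NZ5.cross_sum d hdval.1 X]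
        rw [Finset.sum_congr rfl (fun v _ => hddiv v)]
      have e4 : ∑ v ∈ X, ∑ w' ∈ Xᶜ, (3:ℤ) * (if G.Adj v w' then (1:ℤ) else 0)
          = 3 * (G.cutCard X : ℤ) := by
        have : ∀ v ∈ X, ∑ w' ∈ Xᶜ, (3:ℤ) * (if G.Adj v w' then (1:ℤ) else 0)
            = 3 * ∑ w' ∈ Xᶜ, (if G.Adj v w' then (1:ℤ) else 0) := fun v _ =>
          (Finset.mul_sum _ _ _).symm
        rw [Finset.sum_congr rfl this, ← Finset.mul_sum, ← NZ5.cutCard_sum G X]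
      rw [e3, e4]
    have h1 := hZ X
    have h3 := neg_abs_le (∑ v ∈ X, ε v)
    simp only [Finset.sum_const_zero]
    omega
  obtain ⟨F, hFval, _, hFdiv⟩ := NZ5.hoffman G u2 (fun _ => 0) 1 one_pos (by simp)
    hcut2 g0 hg0val (fun v w' _ => one_dvd _) (fun v => one_dvd _)
  refine ⟨F, hFval.1, hFval.2.1, fun v => by simpa using hFdiv v, ?_⟩
  intro v w' h
  have h1 := hFval.2.2 v w' h
  have h2 := hFval.2.2 w' v (G.adj_symm h)
  have h3 := hFval.1 v w'
  rw [hu2] at h1 h2; dsimp at h1 h2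
  rcases hdpm v w' h with hd1 | hd1
  · have hdneg : d w' v = -1 := by have := hdval.1 w' v; omega
    rw [hd1] at h1; rw [hdneg] at h2
    norm_num at h1 h2
    refine ⟨?_, ?_⟩ <;> rw [abs_of_nonneg (by omega : (0:ℤ) ≤ F v w')] <;> push_cast <;> omega
  · have hdpos : d w' v = 1 := by have := hdval.1 w' v; omega
    rw [hd1] at h1; rw [hdpos] at h2
    norm_num at h1 h2
    refine ⟨?_, ?_⟩ <;> rw [abs_of_nonpos (by omega : F v w' ≤ (0:ℤ))] <;> push_cast <;> omega

end NZ5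


/- STATEMENT 3: a cubic graph `G` has a nowhere-zero 5-flow iff `G` admits a balanced
valuation with values in `{−5/3, +5/3}`. -/
theorem statement3 (G : SimpleGraph V)
    (hcubic : ∀ v, (G.neighborSet v).ncard = 3) :
    (∃ f, G.IsNZFlow 5 f) ↔
      ∃ w : V → ℝ, G.IsBalancedValuation w ∧ ∀ v, w v = 5/3 ∨ w v = -(5/3) := by
  constructor
  · rintro ⟨f, hf⟩
    exact NZ5.forward G hcubic f hf
  · rintro ⟨w, hbal, hw⟩
    exact NZ5.reverse G hcubic w hbal hw
end

section
/- Let P be a path that is a subpath of a cycle whose edges are properly 2-colored with colors 2 and 3 alternately (except possibly one uncolored edge), and suppose the endpoints of every edge colored 2 lie in different classes of a bipartition {A, B} of the path's vertices. If the path has 2l edges all colored 2 and 3 alternately, then the number of B-vertices is exactly one more than the number of A-vertices whenever color 2 is used l times; in general, for any such path F, b_F ≤ a_F + 3, where a_F and b_F count the A- and B-vertices of F. -/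
/-!
Give each vertex the sign `-1` if it lies in `A` and `+1` otherwise, so that `b_F - a_F` is the sum
of the signs along `F`. The two endpoints of a 2-edge have opposite signs and 2-edges are never
adjacent, so reading `F` from left to right and pairing each vertex with its right neighbor along
a 2-edge leaves unpaired only the first vertex, the last one, and endpoints of the 0-edge: two
consecutive edges of color other than 2 must contain the 0-edge. The other `N - 1` edges of the
(odd) cycle alternate, so the two neighbors of the 0-edge get different colors; one of them is a
2-edge, and at most one endpoint of the 0-edge stays unpaired.
-/

open Finset

theorem iff_even_of_forall_succ_iff_not {P : ℕ → Prop} {n : ℕ}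
    (h : ∀ k < n, (P (k + 1) ↔ ¬ P k)) : P n ↔ (P 0 ↔ Even n) := by
  induction n with
  | zero => simp
  | succ n ih =>
    rw [h n n.lt_succ_self, ih fun k hk => h k (by omega), Nat.even_add_one]
    tauto

theorem Finset.card_filter_not_sub_card_filter {ι : Type*} (s : Finset ι) (p : ι → Prop)
    [DecidablePred p] :
    (#{i ∈ s | ¬ p i} : ℤ) - #{i ∈ s | p i} = ∑ i ∈ s, if p i then -1 else 1 := by
  rw [sum_ite]
  simp only [sum_const, smul_neg, nsmul_eq_mul, mul_one]
  ring

/-- The bound counts the vertices left unpaired: vertex `0`, one vertex per 0-edge, and vertex `n`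
when it is paired with vertex `n + 1`, outside the path. -/
theorem sum_range_le_of_coloring (c : ℕ → ℕ) (x : ℕ → ℤ) (hx : ∀ j, x j ≤ 1)
    (hcolors : ∀ j, c j = 0 ∨ c j = 2 ∨ c j = 3)
    (halt : ∀ j, c j ≠ 0 → c (j + 1) ≠ 0 → c j ≠ c (j + 1))
    (hpair : ∀ j, c j = 2 → x j + x (j + 1) = 0)
    (hbefore_zero : ∀ j, c (j + 1) = 0 → c (j + 1 + 1) = 3 → c j = 2) (n : ℕ) :
    ∑ j ∈ range (n + 1), x j ≤
      1 + #{j ∈ range (n + 1) | c j = 0} + if c n = 2 then 1 else 0 := by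
  have hcount : ∀ k, (#{j ∈ range (k + 1) | c j = 0} : ℤ) =
      #{j ∈ range k | c j = 0} + if c k = 0 then 1 else 0 := by
    intro k
    rw [range_add_one, filter_insert]
    split_ifs with h <;> simp [h]
  induction n using Nat.strong_induction_on with
  | _ n ih =>
  have hpaired : ∀ k < n, c k = 2 →
      ∑ j ∈ range (k + 2), x j ≤ 1 + #{j ∈ range (k + 1) | c j = 0} := by
    intro k hk hk2
    rw [sum_range_succ, sum_range_succ, add_assoc, hpair k hk2, add_zero]
    match k, hk with
    | 0, _ => rw [sum_range_zero]; positivity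
    | l + 1, hl =>
      have hl2 : c l ≠ 2 := fun h => halt l (by omega) (by omega) (by omega)
      have hsum := ih l (by omega)
      rw [hcount (l + 1), if_neg (show c (l + 1) ≠ 0 by omega)]
      rw [if_neg hl2] at hsum
      omega
  match n with
  | 0 =>
    have := hx 0
    rw [zero_add, sum_range_one]
    split_ifs <;> omega
  | k + 1 =>
    have hsum := ih k k.lt_succ_self
    have hk := hcolors k
    have hk' := hcolors (k + 1)
    have hx' := hx (k + 1)
    rw [sum_range_succ, hcount (k + 1)]
    by_cases h2 : c k = 2
    · have := hpaired k k.lt_succ_self h2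
      rw [sum_range_succ] at this
      split_ifs <;> omega
    rw [if_neg h2] at hsum
    by_cases h3 : c (k + 1) = 3
    · have hk0 : c k = 0 := by
        by_contra h0
        exact halt k h0 (by omega) (by omega)
      have : ∑ j ∈ range (k + 1), x j ≤ 1 + #{j ∈ range k | c j = 0} := by
        match k with
        | 0 => simpa using hx 0
        | l + 1 => exact hpaired l (by omega) (hbefore_zero l hk0 h3)
      rw [hcount k, if_pos hk0] at hsum ⊢
      rw [if_neg (by omega), if_neg (by omega)]
      omega
    · split_ifs <;> omega

open Fin.NatCast in
theorem Fin.add_natCast_ne_self {N : ℕ} [NeZero N] (p : Fin N) {d : ℕ} (hd : 0 < d)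
    (hdN : d < N) : p + (d : Fin N) ≠ p := by
  rw [Ne, add_eq_left, Fin.natCast_eq_zero]
  exact fun h => absurd (Nat.le_of_dvd hd h) (by omega)

open Fin.NatCast in
theorem neighbor_eq_two_of_eq_zero {N : ℕ} [NeZero N] (hN : 3 ≤ N) (ccol : Fin N → ℕ)
    (hcolors : ∀ i, ccol i = 0 ∨ ccol i = 2 ∨ ccol i = 3)
    (hzero : #{i | ccol i = 0} ≤ 1)
    (hzeroOdd : Even N → ∀ i, ccol i ≠ 0)
    (halt : ∀ i : Fin N, ccol i ≠ 0 → ccol (i + 1) ≠ 0 → ccol i ≠ ccol (i + 1))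
    {i : Fin N} (hi : ccol (i + 1) = 0) : ccol i = 2 ∨ ccol (i + 1 + 1) = 2 := by
  have hodd : ¬ Even N := fun h => hzeroOdd h _ hi
  have hnonzero : ∀ d : ℕ, 0 < d → d < N → ccol (i + 1 + (d : Fin N)) ≠ 0 := fun d hd hdN h0 =>
    Fin.add_natCast_ne_self (i + 1) hd hdN
      (card_le_one.mp hzero _ (by simpa using h0) _ (by simpa using hi))
  have hshift : ∀ k : ℕ, i + 1 + ((k + 1 : ℕ) : Fin N) = i + 1 + 1 + (k : Fin N) := by
    intro k
    push_cast
    abel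
  have hstep : ∀ k < N - 2, (ccol (i + 1 + 1 + ((k + 1 : ℕ) : Fin N)) = 2 ↔
      ¬ ccol (i + 1 + 1 + (k : Fin N)) = 2) := by
    intro k hk
    have h1 := hnonzero (k + 1) (by omega) (by omega)
    have h2 := hnonzero (k + 1 + 1) (by omega) (by omega)
    rw [hshift] at h1 h2
    have hsucc : i + 1 + 1 + (k : Fin N) + 1 = i + 1 + 1 + ((k + 1 : ℕ) : Fin N) := by
      push_cast
      abel
    rw [← hsucc] at h2 ⊢
    have hne := halt _ h1 h2
    have := hcolors (i + 1 + 1 + (k : Fin N))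
    have := hcolors (i + 1 + 1 + (k : Fin N) + 1)
    omega
  have hlast : i + 1 + 1 + ((N - 2 : ℕ) : Fin N) = i := by
    have hN0 : ((N - 2 + 1 + 1 : ℕ) : Fin N) = 0 := by
      rw [show N - 2 + 1 + 1 = N by omega, Fin.natCast_self]
    push_cast at hN0
    calc i + 1 + 1 + ((N - 2 : ℕ) : Fin N) = i + (((N - 2 : ℕ) : Fin N) + 1 + 1) := by abel
      _ = i := by rw [hN0, add_zero]
  have hparity := iff_even_of_forall_succ_iff_not
    (P := fun k : ℕ => ccol (i + 1 + 1 + (k : Fin N)) = 2) hstep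
  rw [hlast, Nat.cast_zero, add_zero, Nat.even_sub (by omega)] at hparity
  simp only [hodd] at hparity
  tauto

open Fin.NatCast in
theorem statement7_general {V : Type*} (N : ℕ) [NeZero N] (hN : 3 ≤ N)
    (cvert : Fin N → V)
    (ccol : Fin N → ℕ)
    (A : Set V) [DecidablePred (· ∈ A)]
    (hcolors : ∀ i, ccol i = 0 ∨ ccol i = 2 ∨ ccol i = 3)
    (hzero : (Finset.univ.filter fun i => ccol i = 0).card ≤ 1)
    (hzeroOdd : Even N → ∀ i, ccol i ≠ 0)
    (halt : ∀ i : Fin N, ccol i ≠ 0 → ccol (i + 1) ≠ 0 → ccol i ≠ ccol (i + 1))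
    (h2AB : ∀ i : Fin N, ccol i = 2 → (cvert i ∈ A ↔ cvert (i + 1) ∉ A))
    -- the subpath: vertices `cvert (t + j)` for `j = 0, …, m`
    (t : Fin N) (m : ℕ) (hm : m < N) :
    (Finset.univ.filter fun j : Fin (m + 1) => cvert (t + ((j : ℕ) : Fin N)) ∉ A).card ≤
      (Finset.univ.filter fun j : Fin (m + 1) => cvert (t + ((j : ℕ) : Fin N)) ∈ A).card + 3 := by
  set c : ℕ → ℕ := fun j => ccol (t + (j : Fin N))
  set x : ℕ → ℤ := fun j => if cvert (t + (j : Fin N)) ∈ A then -1 else 1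
  have hsucc : ∀ j : ℕ, t + ((j + 1 : ℕ) : Fin N) = t + (j : Fin N) + 1 := by
    intro j
    push_cast
    abel
  have hbound := sum_range_le_of_coloring c x
    (fun j => by simp only [x]; split_ifs <;> norm_num)
    (fun j => hcolors _)
    (fun j => by simp only [c, hsucc]; exact halt _)
    (fun j hj => by
      have := h2AB _ hj
      simp only [x, hsucc]
      split_ifs <;> tauto)
    (fun j h0 h3 => by
      simp only [c, hsucc] at h0 h3 ⊢
      simpa [h3] using neighbor_eq_two_of_eq_zero hN ccol hcolors hzero hzeroOdd halt h0) m
  have hzeros : #{j ∈ range (m + 1) | c j = 0} ≤ 1 := by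
    refine (card_le_card_of_injOn (fun j : ℕ => t + (j : Fin N)) ?_ ?_).trans hzero
    · intro j hj
      simp_all [c]
    · exact ((add_right_injective t).comp_injOn (CharP.natCast_injOn_Iio (Fin N) N)).mono
        fun j hj => (mem_range.mp (mem_filter.mp hj).1).trans_le hm
  have hdiff := card_filter_not_sub_card_filter univ
    (fun j : Fin (m + 1) => cvert (t + ((j : ℕ) : Fin N)) ∈ A)
  rw [Fin.sum_univ_eq_sum_range x] at hdiff
  split_ifs at hbound <;> omega

open Fin.NatCast in
theorem statement7 {V : Type*} [DecidableEq V] (N : ℕ) [NeZero N] (hN : 3 ≤ N)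
    (cvert : Fin N → V) (hinj : Function.Injective cvert)
    (ccol : Fin N → ℕ)
    (A : Set V) [DecidablePred (· ∈ A)]
    (hcolors : ∀ i, ccol i = 0 ∨ ccol i = 2 ∨ ccol i = 3)
    (hzero : (Finset.univ.filter fun i => ccol i = 0).card ≤ 1)
    (hzeroOdd : Even N → ∀ i, ccol i ≠ 0)
    (halt : ∀ i : Fin N, ccol i ≠ 0 → ccol (i + 1) ≠ 0 → ccol i ≠ ccol (i + 1))
    (h2AB : ∀ i : Fin N, ccol i = 2 → (cvert i ∈ A ↔ cvert (i + 1) ∉ A))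
    -- the subpath: vertices `cvert (t + j)` for `j = 0, …, m`
    (t : Fin N) (m : ℕ) (hm : m < N) :
    (Finset.univ.filter fun j : Fin (m + 1) => cvert (t + ((j : ℕ) : Fin N)) ∉ A).card ≤
      (Finset.univ.filter fun j : Fin (m + 1) => cvert (t + ((j : ℕ) : Fin N)) ∈ A).card + 3 :=
  statement7_general N hN cvert ccol A hcolors hzero hzeroOdd halt h2AB t m hm
end
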